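/- arXiv:2404.01707 — 8 statements merged into one kernel-verified Lean document; each statement's English description precedes it below -/
import Mathlib

section
/- Let F ⊆ ℝ^d be a closed set such that the boundary of the convex hull of F does not contain any ray. Then the convex hull of F is closed, i.e., closure(conv F) = conv F. -/
/-!
Let `D` be the closure of `C = conv F` and `z ∈ D \ C`. By Carathéodory, `z` is a limit of
combinations `∑ wₙᵢ xₙᵢ` of `finrank + 1` points of `F`; after rescaling by
`rₙ = (1 + ∑ wₙᵢ ‖xₙᵢ‖)⁻¹` all data lie in a compact set. If `rₙ → 0` along a convergent
subsequence, the limits of the rescaled terms are recession directions of `D` that sum to zero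
without all vanishing, so `D` contains a line through `z`. Otherwise the terms with positive limit
weight converge to points of `F` and the others to recession directions, so `z = c + e` with
`c ∈ C`. Either way `z = c + e` with `c ∈ D` and `e ≠ 0` a recession direction of `D`. The ray
`z + ℝ≥0 e` then lies in `D` and misses `interior D = interior C`: `z` lies on the segment between
`c` and any point of the ray, so it would otherwise be interior, whereas `z ∉ C`.
-/

open Set Filter Topology

section RecessionCone

variable {E : Type*} [AddCommGroup E] [Module ℝ E]

def recessionCone (D : Set E) : PointedCone ℝ E where
  carrier := {u | ∀ p ∈ D, ∀ t : ℝ, 0 ≤ t → p + t • u ∈ D}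
  add_mem' {u v} hu hv p hp t ht := by
    simpa only [smul_add, add_assoc] using hv _ (hu p hp t ht) t ht
  zero_mem' p hp t _ := by simpa only [smul_zero, add_zero] using hp
  smul_mem' c u hu p hp t ht := by
    show p + t • ((c : ℝ) • u) ∈ D
    simpa only [smul_smul] using hu p hp (t * c) (mul_nonneg ht c.2)

theorem mem_recessionCone {D : Set E} {u : E} :
    u ∈ recessionCone D ↔ ∀ p ∈ D, ∀ t : ℝ, 0 ≤ t → p + t • u ∈ D :=
  Iff.rfl

theorem neg_mem_of_sum_eq_zero {M S ι : Type*} [AddCommGroup M] [SetLike S M]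
    [AddSubmonoidClass S M] [Fintype ι] [DecidableEq ι] {C : S} {v : ι → M}
    (hv : ∀ i, v i ∈ C) (hsum : ∑ i, v i = 0) (j : ι) : -v j ∈ C := by
  have hsplit := Finset.add_sum_erase Finset.univ v (Finset.mem_univ j)
  rw [hsum, add_eq_zero_iff_neg_eq] at hsplit
  exact hsplit ▸ sum_mem fun i _ => hv i

theorem exists_ne_sub_mem_recessionCone_of_sum_eq_zero {ι : Type*} [Fintype ι] {D : Set E}
    {z : E} (hz : z ∈ D) {v : ι → E} (hv : ∀ i, v i ∈ recessionCone D) (hsum : ∑ i, v i = 0)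
    (hne : v ≠ 0) : ∃ c ∈ D, c ≠ z ∧ z - c ∈ recessionCone D := by
  classical
  obtain ⟨j, hj⟩ := Function.ne_iff.mp hne
  have hc := mem_recessionCone.mp (neg_mem_of_sum_eq_zero hv hsum j) z hz 1 zero_le_one
  exact ⟨z + (1 : ℝ) • -v j, hc, by simpa using hj, by simpa using hv j⟩

end RecessionCone

variable {E : Type*} [NormedAddCommGroup E] {ι : Type*} [Fintype ι]

theorem pi_norm_le_sum_norm (y : ι → E) : ‖y‖ ≤ ∑ i, ‖y i‖ :=
  (pi_norm_le_iff_of_nonneg (by positivity)).mpr fun i =>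
    Finset.single_le_sum (fun j _ => norm_nonneg (y j)) (Finset.mem_univ i)

theorem inv_one_add_sum_mul_norm_mem_Ioc {w : ι → ℝ} (hw : ∀ i, 0 ≤ w i) (x : ι → E) :
    (1 + ∑ i, w i * ‖x i‖)⁻¹ ∈ Ioc 0 1 := by
  have : 0 ≤ ∑ i, w i * ‖x i‖ := Finset.sum_nonneg fun i _ => mul_nonneg (hw i) (norm_nonneg _)
  exact ⟨by positivity, inv_le_one_of_one_le₀ (by linarith)⟩

variable [NormedSpace ℝ E]

theorem sum_norm_smul_inv_one_add_sum_mul_norm {w : ι → ℝ} (hw : ∀ i, 0 ≤ w i) (x : ι → E) :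
    ∑ i, ‖((1 + ∑ j, w j * ‖x j‖)⁻¹ * w i) • x i‖ = 1 - (1 + ∑ j, w j * ‖x j‖)⁻¹ := by
  have hr := inv_one_add_sum_mul_norm_mem_Ioc hw x
  simp_rw [norm_smul, Real.norm_of_nonneg (mul_nonneg hr.1.le (hw _)), mul_assoc,
    ← Finset.mul_sum]
  have hpos : 0 < 1 + ∑ j, w j * ‖x j‖ := inv_pos.mp hr.1
  field_simp
  ring

theorem mem_recessionCone_of_tendsto {κ : Type*} {l : Filter κ} [l.NeBot] {D : Set E}
    (hD : Convex ℝ D) (hDc : IsClosed D) {μ : κ → ℝ} {y : κ → E} {v : E}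
    (hμ0 : ∀ n, 0 ≤ μ n) (hy : ∀ n, y n ∈ D) (hμ : Tendsto μ l (𝓝 0))
    (hv : Tendsto (fun n => μ n • y n) l (𝓝 v)) : v ∈ recessionCone D := by
  refine mem_recessionCone.mpr fun p hp t ht => ?_
  have hlim : Tendsto (fun n => (1 - t * μ n) • p + t • (μ n • y n)) l (𝓝 (p + t • v)) := by
    simpa using ((tendsto_const_nhds (x := (1 : ℝ)).sub (hμ.const_mul t)).smul_const p).add
      (hv.const_smul t)
  refine hDc.mem_of_tendsto hlim ?_
  filter_upwards [(hμ.const_mul t).eventually_lt_const (by simp : t * 0 < 1)] with n hn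
  have hcombo := hD hp (hy n) (by linarith) (mul_nonneg ht (hμ0 n)) (sub_add_cancel 1 _)
  rwa [mul_smul] at hcombo

theorem Convex.mem_interior_of_add_smul_sub_mem_interior {D : Set E} (hD : Convex ℝ D)
    {c z : E} (hc : c ∈ D) {t : ℝ} (ht : 0 ≤ t) (h : z + t • (z - c) ∈ interior D) :
    z ∈ interior D := by
  have hcombo : (1 + t)⁻¹ • (z + t • (z - c)) + (t / (1 + t)) • c = z := by
    match_scalars
    · field_simp
    · field_simp; ring
  rw [← hcombo]
  exact hD.combo_interior_closure_mem_interior h (subset_closure hc) (by positivity)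
    (by positivity) (by field_simp)

theorem Convex.interior_closure_eq_interior [FiniteDimensional ℝ E] {C : Set E}
    (hC : Convex ℝ C) : interior (closure C) = interior C := by
  rcases (interior C).eq_empty_or_nonempty with h | h
  · rw [h, ← not_nonempty_iff_eq_empty]
    intro hne
    have hspan := hC.closure.interior_nonempty_iff_affineSpan_eq_top.mp hne
    have hle : affineSpan ℝ (closure C) ≤ affineSpan ℝ C := affineSpan_le.mpr <|
      closure_minimal (subset_affineSpan ℝ C) (affineSpan ℝ C).closed_of_finiteDimensional
    rw [hspan, top_le_iff, ← hC.interior_nonempty_iff_affineSpan_eq_top, h] at hle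
    exact not_nonempty_empty hle
  · exact hC.interior_closure_eq_interior_of_nonempty_interior h

theorem exists_stdSimplex_fin_of_mem_convexHull [FiniteDimensional ℝ E] {F : Set E} {z : E}
    (hz : z ∈ convexHull ℝ F) :
    ∃ (w : Fin (Module.finrank ℝ E + 1) → ℝ) (x : Fin (Module.finrank ℝ E + 1) → E),
      w ∈ stdSimplex ℝ _ ∧ (∀ i, x i ∈ F) ∧ ∑ i, w i • x i = z := by
  obtain ⟨ι, _, p, w, hpF, hindep, hw0, hw1, hwp⟩ := eq_pos_convex_span_of_mem_convexHull hz
  obtain ⟨i₀⟩ : Nonempty ι := by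
    by_contra h
    simp [not_nonempty_iff.mp h] at hw1
  have hcard : Fintype.card ι ≤ Fintype.card (Fin (Module.finrank ℝ E + 1)) := by
    simpa using hindep.card_le_finrank_succ.trans (Nat.succ_le_succ (Submodule.finrank_le _))
  obtain ⟨e⟩ := Function.Embedding.nonempty_of_card_le hcard
  set w' := Function.extend e w 0
  set p' := Function.extend e p fun _ => p i₀
  have hw' (i : ι) : w' (e i) = w i := e.injective.extend_apply _ _ i
  have hp' (i : ι) : p' (e i) = p i := e.injective.extend_apply _ _ i
  have hw'_off (j) (hj : j ∉ range e) : w' j = 0 := Function.extend_apply' _ _ _ hj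
  have hp'_off (j) (hj : j ∉ range e) : p' j = p i₀ := Function.extend_apply' _ _ _ hj
  refine ⟨w', p', ⟨fun j => ?_, ?_⟩, fun j => ?_, ?_⟩
  · by_cases hj : j ∈ range e
    · obtain ⟨i, rfl⟩ := hj
      exact hw' i ▸ (hw0 i).le
    · exact (hw'_off j hj).ge
  · exact hw1 ▸ (Fintype.sum_of_injective e e.injective w w' hw'_off fun i => (hw' i).symm).symm
  · by_cases hj : j ∈ range e
    · obtain ⟨i, rfl⟩ := hj
      exact hp' i ▸ hpF ⟨i, rfl⟩
    · exact hp'_off j hj ▸ hpF ⟨i₀, rfl⟩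
  · refine hwp ▸ (Fintype.sum_of_injective e e.injective (fun i => w i • p i)
      (fun j => w' j • p' j) (fun j hj => ?_) fun i => by rw [hw', hp']).symm
    rw [hw'_off j hj, zero_smul]

theorem exists_sum_sub_mem_recessionCone_of_tendsto {κ : Type*} {l : Filter κ} [l.NeBot]
    {F : Set E} (hF : IsClosed F) {w : κ → ι → ℝ} {x : κ → ι → E} {a : ι → ℝ} {u : ι → E}
    (hw : ∀ n, w n ∈ stdSimplex ℝ ι) (hx : ∀ n i, x n i ∈ F) (hwa : Tendsto w l (𝓝 a))
    (hu : ∀ i, Tendsto (fun n => w n i • x n i) l (𝓝 (u i))) :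
    ∃ c ∈ convexHull ℝ F, ∑ i, u i - c ∈ recessionCone (closure (convexHull ℝ F)) := by
  have ha : a ∈ stdSimplex ℝ ι := (isClosed_stdSimplex ℝ ι).mem_of_tendsto hwa (.of_forall hw)
  have hwai (i : ι) : Tendsto (fun n => w n i) l (𝓝 (a i)) := tendsto_pi_nhds.mp hwa i
  have hξF (i : ι) (hi : a i ≠ 0) : (a i)⁻¹ • u i ∈ F := by
    refine hF.mem_of_tendsto (((hwai i).inv₀ hi).smul (hu i)) ?_
    filter_upwards [(hwai i).eventually_ne hi] with n hn
    rw [inv_smul_smul₀ hn]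
    exact hx n i
  refine ⟨∑ i, a i • (a i)⁻¹ • u i, ?_, ?_⟩
  · simpa only [finsum_eq_sum_of_fintype] using (convex_convexHull ℝ F).finsum_mem ha.1
      (by rw [finsum_eq_sum_of_fintype, ha.2]) fun i hi => subset_convexHull ℝ F (hξF i hi)
  rw [← Finset.sum_sub_distrib]
  refine sum_mem fun i _ => ?_
  rcases eq_or_ne (a i) 0 with hi | hi
  · rw [hi, zero_smul, sub_zero]
    exact mem_recessionCone_of_tendsto (convex_convexHull ℝ F).closure isClosed_closure
      (fun n => (hw n).1 i) (fun n => subset_closure (subset_convexHull ℝ F (hx n i)))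
      (hi ▸ hwai i) (hu i)
  · rw [smul_inv_smul₀ hi, sub_self]
    exact zero_mem _

theorem exists_ne_sub_mem_recessionCone_of_tendsto_sum [FiniteDimensional ℝ E] {F : Set E}
    (hF : IsClosed F) {w : ℕ → ι → ℝ} {x : ℕ → ι → E} {z : E}
    (hw : ∀ n, w n ∈ stdSimplex ℝ ι) (hx : ∀ n i, x n i ∈ F)
    (hz : Tendsto (fun n => ∑ i, w n i • x n i) atTop (𝓝 z)) (hzF : z ∉ convexHull ℝ F) :
    ∃ c ∈ closure (convexHull ℝ F), c ≠ z ∧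
      z - c ∈ recessionCone (closure (convexHull ℝ F)) := by
  set D := closure (convexHull ℝ F)
  set r : ℕ → ℝ := fun n => (1 + ∑ i, w n i * ‖x n i‖)⁻¹
  set y : ℕ → ι → E := fun n i => (r n * w n i) • x n i
  have hr (n : ℕ) : r n ∈ Ioc 0 1 := inv_one_add_sum_mul_norm_mem_Ioc (hw n).1 _
  have hy_norm (n : ℕ) : ∑ i, ‖y n i‖ = 1 - r n :=
    sum_norm_smul_inv_one_add_sum_mul_norm (hw n).1 _
  have hy_ball (n : ℕ) : y n ∈ Metric.closedBall 0 1 :=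
    mem_closedBall_zero_iff.mpr ((pi_norm_le_sum_norm _).trans (by linarith [hy_norm n, (hr n).1]))
  obtain ⟨⟨σ, a, v⟩, -, φ, hφ, hlim⟩ :=
    (isCompact_Icc.prod ((isCompact_stdSimplex ℝ ι).prod (isCompact_closedBall 0 1))).tendsto_subseq
      (x := fun n => (r n, w n, y n)) fun n => ⟨Ioc_subset_Icc_self (hr n), hw n, hy_ball n⟩
  have hrσ : Tendsto (r ∘ φ) atTop (𝓝 σ) := hlim.fst_nhds
  have hwa : Tendsto (w ∘ φ) atTop (𝓝 a) := hlim.snd_nhds.fst_nhds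
  have hyv (i : ι) : Tendsto (fun k => y (φ k) i) atTop (𝓝 (v i)) :=
    tendsto_pi_nhds.mp hlim.snd_nhds.snd_nhds i
  have hv_sum : ∑ i, v i = σ • z := by
    refine tendsto_nhds_unique (tendsto_finsetSum _ fun i _ => hyv i) ?_
    refine (hrσ.smul (hz.comp hφ.tendsto_atTop)).congr fun k => ?_
    simp only [y, Function.comp_apply, Finset.smul_sum, mul_smul]
  have hv_norm : ∑ i, ‖v i‖ = 1 - σ :=
    tendsto_nhds_unique (tendsto_finsetSum _ fun i _ => (hyv i).norm)
      ((tendsto_const_nhds.sub hrσ).congr fun k => (hy_norm _).symm)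
  rcases eq_or_ne σ 0 with rfl | hσ
  · have hvD (i : ι) : v i ∈ recessionCone D :=
      mem_recessionCone_of_tendsto (convex_convexHull ℝ F).closure isClosed_closure
        (fun k => mul_nonneg (hr _).1.le ((hw _).1 i))
        (fun k => subset_closure (subset_convexHull ℝ F (hx (φ k) i)))
        (by simpa using hrσ.mul (tendsto_pi_nhds.mp hwa i)) (hyv i)
    have hzD : z ∈ D := mem_closure_of_tendsto hz (.of_forall fun n =>
      (convex_convexHull ℝ F).sum_mem (fun i _ => (hw n).1 i) (hw n).2
        fun i _ => subset_convexHull ℝ F (hx n i))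
    refine exists_ne_sub_mem_recessionCone_of_sum_eq_zero hzD hvD (by simp [hv_sum]) ?_
    rintro rfl
    simp at hv_norm
  · obtain ⟨c, hcF, hc⟩ := exists_sum_sub_mem_recessionCone_of_tendsto hF (fun k => hw (φ k))
      (fun k => hx (φ k)) hwa (u := fun i => σ⁻¹ • v i) fun i => by
        refine ((hrσ.inv₀ hσ).smul (hyv i)).congr fun k => ?_
        simp only [y, Function.comp_apply, smul_smul, ← mul_assoc,
          inv_mul_cancel₀ (hr _).1.ne', one_mul]
    rw [← Finset.smul_sum, hv_sum, inv_smul_smul₀ hσ] at hc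
    exact ⟨c, subset_closure hcF, fun h => hzF (h ▸ hcF), hc⟩

theorem exists_ne_sub_mem_recessionCone_of_mem_closure_convexHull [FiniteDimensional ℝ E]
    {F : Set E} (hF : IsClosed F) {z : E} (hz : z ∈ closure (convexHull ℝ F))
    (hzF : z ∉ convexHull ℝ F) :
    ∃ c ∈ closure (convexHull ℝ F), c ≠ z ∧
      z - c ∈ recessionCone (closure (convexHull ℝ F)) := by
  obtain ⟨zs, hzsC, hzs⟩ := mem_closure_iff_seq_limit.mp hz
  choose w x hw hx hwx using fun n => exists_stdSimplex_fin_of_mem_convexHull (hzsC n)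
  exact exists_ne_sub_mem_recessionCone_of_tendsto_sum hF hw hx (by simpa only [hwx] using hzs)
    hzF

theorem closure_convexHull_of_no_rays_in_frontier
    (d : ℕ) (F : Set (EuclideanSpace ℝ (Fin d))) (hF : IsClosed F)
    (hnoray : ∀ (x e : EuclideanSpace ℝ (Fin d)), e ≠ 0 →
      ¬ ((fun α : ℝ => x + α • e) '' Set.Ici 0 ⊆ frontier (convexHull ℝ F))) :
    closure (convexHull ℝ F) = convexHull ℝ F := by
  refine Subset.antisymm (fun z hz => ?_) subset_closure
  by_contra hzF
  have hconv := convex_convexHull ℝ F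
  obtain ⟨c, hc, hcz, hrec⟩ := exists_ne_sub_mem_recessionCone_of_mem_closure_convexHull hF hz hzF
  refine hnoray z (z - c) (sub_ne_zero.mpr hcz.symm) ?_
  rintro _ ⟨t, ht, rfl⟩
  refine ⟨mem_recessionCone.mp hrec z hz t ht, fun hint => hzF (interior_subset ?_)⟩
  rw [← hconv.interior_closure_eq_interior] at hint ⊢
  exact hconv.closure.mem_interior_of_add_smul_sub_mem_interior hc ht hint
end

section
/- Let C ⊆ ℝ^d be a closed convex set and L a hyperplane. If C ∩ L is nonempty and contains no ray, then C ∩ (L + closedBall(0,r)) is compact for every r ≥ 0. -/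
open Set Metric Pointwise

/-!
The slice `S = C ∩ (L + closedBall 0 r)` is closed and convex and contains a point `x₁ ∈ C ∩ L`.
If `S` were unbounded, the unit directions from `x₁` towards far-away points of `S` would
accumulate (compactness of the unit sphere) at some `e`, and by convexity and closedness the ray
`x₁ + ℝ≥0 • e` would lie in `S`. Along that ray `⟪v, ·⟫` stays within `r‖v‖` of `c`, which forces
`⟪v, e⟫ = 0`; so the ray lies in `C ∩ L`, which is impossible.
-/

section Ray

variable {E : Type*} [NormedAddCommGroup E] [NormedSpace ℝ E] {S : Set E} {x₀ x : E}

theorem Convex.add_smul_norm_inv_smul_sub_mem (hS : Convex ℝ S) (hx₀ : x₀ ∈ S) (hx : x ∈ S)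
    {α : ℝ} (hα₀ : 0 ≤ α) (hα : α ≤ ‖x - x₀‖) :
    x₀ + α • (‖x - x₀‖⁻¹ • (x - x₀)) ∈ S := by
  rw [smul_smul]
  exact hS.add_smul_sub_mem hx₀ hx
    ⟨by positivity, mul_inv_le_one_of_le₀ hα (norm_nonneg _)⟩

variable [ProperSpace E]

theorem IsClosed.exists_ray_subset_of_not_isBounded (hS : IsClosed S) (hconv : Convex ℝ S)
    (hx₀ : x₀ ∈ S) (hunb : ¬ Bornology.IsBounded S) :
    ∃ e ≠ 0, ∀ α : ℝ, 0 ≤ α → x₀ + α • e ∈ S := by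
  have hfar : ∀ n : ℕ, ∃ x ∈ S, (n : ℝ) < ‖x - x₀‖ := fun n => by
    simpa [subset_def, dist_eq_norm] using
      fun h => hunb ((isBounded_iff_subset_closedBall x₀).2 ⟨n, h⟩)
  choose x hxS hxn using hfar
  set u : ℕ → E := fun n => ‖x n - x₀‖⁻¹ • (x n - x₀)
  have hu : ∀ n, u n ∈ sphere (0 : E) 1 := fun n => by
    have : x n - x₀ ≠ 0 := norm_pos_iff.1 ((Nat.cast_nonneg n).trans_lt (hxn n))
    simp [u, norm_smul, this]
  obtain ⟨e, he, φ, hφ, hlim⟩ := (isCompact_sphere (0 : E) 1).tendsto_subseq hu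
  refine ⟨e, ne_zero_of_mem_unit_sphere ⟨e, he⟩, fun α hα => ?_⟩
  refine hS.mem_of_tendsto (tendsto_const_nhds.add (hlim.const_smul α)) ?_
  filter_upwards [Filter.eventually_ge_atTop ⌈α⌉₊] with k hk
  refine hconv.add_smul_norm_inv_smul_sub_mem hx₀ (hxS (φ k)) hα (le_of_lt ?_)
  calc α ≤ ⌈α⌉₊ := Nat.le_ceil α
    _ ≤ φ k := by exact_mod_cast hk.trans hφ.le_apply
    _ < ‖x (φ k) - x₀‖ := hxn (φ k)

end Ray

theorem eq_zero_of_forall_abs_mul_le {b M : ℝ} (h : ∀ α : ℝ, 0 ≤ α → |α * b| ≤ M) : b = 0 := by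
  by_contra hb
  have hM : 0 ≤ M := by simpa using h 0 le_rfl
  have := h ((M + 1) / |b|) (by positivity)
  rw [abs_mul, abs_of_nonneg (by positivity : 0 ≤ (M + 1) / |b|),
    div_mul_cancel₀ _ (abs_ne_zero.2 hb)] at this
  linarith

section Slab

variable {F : Type*} [NormedAddCommGroup F] [InnerProductSpace ℝ F] {v y e : F} {c r : ℝ}

theorem abs_inner_sub_le_of_mem_add_closedBall
    (hy : y ∈ {z | inner ℝ v z = c} + closedBall 0 r) : |inner ℝ v y - c| ≤ ‖v‖ * r := by
  obtain ⟨z, hz, b, hb, rfl⟩ := hy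
  rw [inner_add_right, show inner ℝ v z = c from hz, add_sub_cancel_left]
  exact (abs_real_inner_le_norm v b).trans
    (mul_le_mul_of_nonneg_left (mem_closedBall_zero_iff.1 hb) (norm_nonneg v))

theorem inner_eq_zero_of_forall_add_smul_mem_add_closedBall (hy : inner ℝ v y = c)
    (hray : ∀ α : ℝ, 0 ≤ α → y + α • e ∈ {z | inner ℝ v z = c} + closedBall 0 r) :
    inner ℝ v e = 0 :=
  eq_zero_of_forall_abs_mul_le fun α hα => by
    simpa [inner_add_right, inner_smul_right, hy] using
      abs_inner_sub_le_of_mem_add_closedBall (hray α hα)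

end Slab

theorem compact_cap_of_no_rays_general
    (d : ℕ) (C : Set (EuclideanSpace ℝ (Fin d)))
    (hC : IsClosed C) (hconv : Convex ℝ C)
    (v : EuclideanSpace ℝ (Fin d)) (c : ℝ)
    (L : Set (EuclideanSpace ℝ (Fin d)))
    (hL : L = {y | inner ℝ v y = (c : ℝ)})
    (hne : (C ∩ L).Nonempty)
    (hnoray : ∀ (x e : EuclideanSpace ℝ (Fin d)), e ≠ 0 →
      ¬ ((fun α : ℝ => x + α • e) '' Set.Ici 0 ⊆ C ∩ L))
    (r : ℝ) (hr : 0 ≤ r) :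
    IsCompact (C ∩ (L + closedBall (0 : EuclideanSpace ℝ (Fin d)) r)) := by
  subst hL
  obtain ⟨x₁, hx₁C, hx₁L⟩ := hne
  have hLclosed : IsClosed {y | inner ℝ v y = c} :=
    isClosed_eq (continuous_const.inner continuous_id) continuous_const
  have hSclosed := hC.inter (hLclosed.add_right_of_isCompact (isCompact_closedBall 0 r))
  refine isCompact_of_isClosed_isBounded hSclosed (by_contra fun hunb => ?_)
  have hSconv := hconv.inter
    ((convex_hyperplane (innerₛₗ ℝ v).isLinear c).add (convex_closedBall 0 r))
  have hx₁S : x₁ ∈ C ∩ ({y | inner ℝ v y = c} + closedBall 0 r) :=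
    ⟨hx₁C, x₁, hx₁L, 0, mem_closedBall_self hr, add_zero x₁⟩
  obtain ⟨e, he, hray⟩ := hSclosed.exists_ray_subset_of_not_isBounded hSconv hx₁S hunb
  have hve :=
    inner_eq_zero_of_forall_add_smul_mem_add_closedBall hx₁L fun α hα => (hray α hα).2
  refine hnoray x₁ e he ?_
  rintro _ ⟨α, hα, rfl⟩
  exact ⟨(hray α hα).1, by simpa [inner_add_right, inner_smul_right, hve] using hx₁L⟩

theorem compact_cap_of_no_rays
    (d : ℕ) (C : Set (EuclideanSpace ℝ (Fin d)))
    (hC : IsClosed C) (hconv : Convex ℝ C)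
    (v : EuclideanSpace ℝ (Fin d)) (c : ℝ) (hv : v ≠ 0)
    (L : Set (EuclideanSpace ℝ (Fin d)))
    (hL : L = {y | inner ℝ v y = (c : ℝ)})
    (hne : (C ∩ L).Nonempty)
    (hnoray : ∀ (x e : EuclideanSpace ℝ (Fin d)), e ≠ 0 →
      ¬ ((fun α : ℝ => x + α • e) '' Set.Ici 0 ⊆ C ∩ L))
    (r : ℝ) (hr : 0 ≤ r) :
    IsCompact (C ∩ (L + closedBall (0 : EuclideanSpace ℝ (Fin d)) r)) :=
  compact_cap_of_no_rays_general d C hC hconv v c L hL hne hnoray r hr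
end

section
/- For any family of nonempty half-open intervals I_x = (y_x, x] ⊆ (0,1] indexed by x ∈ (0,1] (with y_x < x), there exists a subset C ⊆ (0,1] such that the intervals {I_x : x ∈ C} are pairwise disjoint and their union equals (0,1]. -/
open Set

theorem disjoint_cover_of_halfopen_intervals
    (y : ℝ → ℝ)
    (hy : ∀ x ∈ Set.Ioc (0:ℝ) 1, y x < x ∧ Set.Ioc (y x) x ⊆ Set.Ioc (0:ℝ) 1) :
    ∃ C ⊆ Set.Ioc (0:ℝ) 1,
      (C.PairwiseDisjoint (fun x => Set.Ioc (y x) x)) ∧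
      (⋃ x ∈ C, Set.Ioc (y x) x) = Set.Ioc (0:ℝ) 1 := by
  classical
  set f : ℝ → Set ℝ := fun x => Set.Ioc (y x) x with hf
  set S : Set (Set ℝ) := {C | C ⊆ Set.Ioc (0:ℝ) 1 ∧ C.PairwiseDisjoint f ∧
      ∃ a : ℝ, 0 ≤ a ∧ a ≤ 1 ∧ C ⊆ Set.Ioc a 1 ∧ (⋃ x ∈ C, f x) = Set.Ioc a 1} with hS
  have hempty : (∅ : Set ℝ) ∈ S := by
    refine ⟨empty_subset _, pairwiseDisjoint_empty, 1, zero_le_one, le_refl 1, empty_subset _, ?_⟩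
    simp
  -- choice of the parameter a for each member of S
  have hchoice : ∀ C ∈ S, ∃ a : ℝ, 0 ≤ a ∧ a ≤ 1 ∧ C ⊆ Set.Ioc a 1 ∧ (⋃ x ∈ C, f x) = Set.Ioc a 1 :=
    fun C hC => hC.2.2
  obtain ⟨m, -, hmS, hmax⟩ :
      ∃ m, (∅ : Set ℝ) ⊆ m ∧ Maximal (· ∈ S) m := by
    apply zorn_subset_nonempty S ?_ ∅ hempty
    intro c hcS hchain hcne
    refine ⟨⋃₀ c, ?_, fun s hs => subset_sUnion_of_mem hs⟩
    -- pick a's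
    set aof : Set ℝ → ℝ := fun C => if h : C ∈ S then (hchoice C h).choose else 0 with haof
    have haofspec : ∀ C ∈ c, 0 ≤ aof C ∧ aof C ≤ 1 ∧ C ⊆ Set.Ioc (aof C) 1 ∧
        (⋃ x ∈ C, f x) = Set.Ioc (aof C) 1 := by
      intro C hC
      have h := hcS hC
      simp only [haof, dif_pos h]
      exact (hchoice C h).choose_spec
    set A : Set ℝ := aof '' c with hA
    have hAne : A.Nonempty := hcne.image _
    have hAbdd : BddBelow A := ⟨0, by rintro _ ⟨C, hC, rfl⟩; exact (haofspec C hC).1⟩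
    set a : ℝ := sInf A with ha
    have ha0 : 0 ≤ a := le_csInf hAne (by rintro _ ⟨C, hC, rfl⟩; exact (haofspec C hC).1)
    have haleC : ∀ C ∈ c, a ≤ aof C := fun C hC => csInf_le hAbdd ⟨C, hC, rfl⟩
    obtain ⟨C0, hC0⟩ := hcne
    have ha1 : a ≤ 1 := le_trans (haleC C0 hC0) (haofspec C0 hC0).2.1
    refine ⟨?_, ?_, a, ha0, ha1, ?_, ?_⟩
    · exact sUnion_subset fun C hC => (hcS hC).1
    · intro x hx x' hx' hxx'
      obtain ⟨C, hC, hxC⟩ := hx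
      obtain ⟨C', hC', hx'C⟩ := hx'
      rcases hchain.total hC hC' with h | h
      · exact (hcS hC').2.1 (h hxC) hx'C hxx'
      · exact (hcS hC).2.1 hxC (h hx'C) hxx'
    · intro x hx
      obtain ⟨C, hC, hxC⟩ := hx
      have := (haofspec C hC).2.2.1 hxC
      exact ⟨lt_of_le_of_lt (haleC C hC) this.1, this.2⟩
    · apply Subset.antisymm
      · intro t ht
        simp only [mem_iUnion] at ht
        obtain ⟨x, ⟨C, hC, hxC⟩, htx⟩ := ht
        have : t ∈ Set.Ioc (aof C) 1 := by
          rw [← (haofspec C hC).2.2.2]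
          exact mem_biUnion hxC htx
        exact ⟨lt_of_le_of_lt (haleC C hC) this.1, this.2⟩
      · intro t ht
        obtain ⟨a', ⟨C, hC, rfl⟩, ha'⟩ := exists_lt_of_csInf_lt hAne ht.1
        have : t ∈ ⋃ x ∈ C, f x := by
          rw [(haofspec C hC).2.2.2]; exact ⟨ha', ht.2⟩
        obtain ⟨x, hxC, htx⟩ := mem_iUnion₂.1 this
        exact mem_iUnion₂.2 ⟨x, ⟨C, hC, hxC⟩, htx⟩
  obtain ⟨hm1, hm2, a, ha0, ha1, hma, hmu⟩ := hmS
  -- the maximal element has a = 0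
  have hazero : a = 0 := by
    by_contra hne
    have hapos : 0 < a := lt_of_le_of_ne ha0 (Ne.symm hne)
    have haIoc : a ∈ Set.Ioc (0:ℝ) 1 := ⟨hapos, ha1⟩
    obtain ⟨hya, hyasub⟩ := hy a haIoc
    have hya0 : 0 ≤ y a := by
      by_contra h
      push_neg at h
      have : y a / 2 ∈ Set.Ioc (y a) a :=
        ⟨by linarith, by linarith⟩
      exact absurd (hyasub this).1 (by linarith)
    have haNm : a ∉ m := fun h => lt_irrefl a (hma h).1
    have hnew : insert a m ∈ S := by
      refine ⟨insert_subset haIoc hm1, ?_, y a, hya0, le_trans hya.le ha1, ?_, ?_⟩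
      · apply hm2.insert_of_notMem haNm
        intro x hx
        have hIx : f x ⊆ Set.Ioc a 1 := by
          rw [← hmu]; exact subset_biUnion_of_mem hx
        apply Set.disjoint_left.2
        intro t hta htx
        exact absurd ((hIx htx).1) (not_lt.2 hta.2)
      · intro x hx
        rcases hx with rfl | hx
        · exact ⟨hya, ha1⟩
        · exact ⟨lt_trans hya (hma hx).1, (hma hx).2⟩
      · rw [biUnion_insert, hmu, hf]
        exact Set.Ioc_union_Ioc_eq_Ioc hya.le ha1
    exact haNm (hmax hnew (subset_insert a m) (mem_insert a m))
  refine ⟨m, hm1, hm2, ?_⟩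
  rw [hmu, hazero]
end

section
/- Let S₁ ⊆ S₂ ⊆ S₃ ⊆ ... be an increasing sequence of closed subsets of [0,1], each containing {0,1}, and let S be the closure of their union. For a Lebesgue-integrable function ψ : [0,1] → ℝ^d, the functions E_{S_n}ψ converge to E_S ψ almost everywhere on [0,1]. -/
open scoped Classical
open Set MeasureTheory Filter

/-- The "conditional expectation" of `ψ` with respect to the closed set `S ⊆ [0,1]`:
it equals `ψ x` for `x ∈ S` and the average of `ψ` over the complementary interval
(connected component of `[0,1] \ S`) containing `x` otherwise. -/
noncomputable def condExpSet {d : ℕ} (S : Set ℝ) (ψ : ℝ → EuclideanSpace ℝ (Fin d)) (x : ℝ) :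
    EuclideanSpace ℝ (Fin d) :=
  if x ∈ S then ψ x
  else ⨍ y in connectedComponentIn (Set.Icc (0:ℝ) 1 \ S) x, ψ y

/-!
The component of `[0,1] \ T` containing `x ∉ T` is `(gapLeft T x, gapRight T x)`. Along the
increasing sequence `Sₙ` these endpoints converge monotonically to those of `S = closure (⋃ Sₙ)`,
unless `x ∈ S` is an endpoint of a gap of `S`, which happens only on a countable set. If
`x ∈ ⋃ Sₙ` the sequence is eventually `ψ x`; if `x ∉ S` the limit interval is nondegenerate and
the averages converge by continuity of the primitive of `ψ`; if `x ∈ S \ ⋃ Sₙ` the intervals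
shrink to `x` and the Lebesgue differentiation theorem gives the limit `ψ x` almost everywhere.
-/

open scoped Topology

def gapLeft {α : Type*} [ConditionallyCompleteLattice α] (T : Set α) (x : α) : α :=
  sSup (T ∩ Iic x)

def gapRight {α : Type*} [ConditionallyCompleteLattice α] (T : Set α) (x : α) : α :=
  sInf (T ∩ Ici x)

section Gap

variable {α : Type*} [ConditionallyCompleteLinearOrder α] {T : Set α} {x : α}

lemma gapLeft_le (hT : (T ∩ Iic x).Nonempty) : gapLeft T x ≤ x :=
  csSup_le hT fun _ hy => hy.2

lemma gapLeft_of_mem (hx : x ∈ T) : gapLeft T x = x :=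
  IsGreatest.csSup_eq ⟨⟨hx, le_rfl⟩, fun _ hy => hy.2⟩

lemma le_gapLeft {y : α} (hy : y ∈ T) (hyx : y ≤ x) : y ≤ gapLeft T x :=
  le_csSup ⟨x, fun _ hz => hz.2⟩ ⟨hy, hyx⟩

lemma le_gapRight (hT : (T ∩ Ici x).Nonempty) : x ≤ gapRight T x :=
  gapLeft_le (α := αᵒᵈ) hT

lemma gapRight_of_mem (hx : x ∈ T) : gapRight T x = x :=
  gapLeft_of_mem (α := αᵒᵈ) hx

lemma gapRight_le {y : α} (hy : y ∈ T) (hxy : x ≤ y) : gapRight T x ≤ y :=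
  le_gapLeft (α := αᵒᵈ) hy hxy

variable [TopologicalSpace α] [OrderTopology α]

lemma gapLeft_mem (hT : IsClosed T) (hne : (T ∩ Iic x).Nonempty) : gapLeft T x ∈ T :=
  ((hT.inter isClosed_Iic).csSup_mem hne ⟨x, fun _ hy => hy.2⟩).1

lemma gapLeft_lt (hT : IsClosed T) (hne : (T ∩ Iic x).Nonempty) (hx : x ∉ T) : gapLeft T x < x :=
  (gapLeft_le hne).lt_of_ne fun h => hx (h ▸ gapLeft_mem hT hne)

lemma gapRight_mem (hT : IsClosed T) (hne : (T ∩ Ici x).Nonempty) : gapRight T x ∈ T :=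
  gapLeft_mem (α := αᵒᵈ) hT hne

lemma lt_gapRight (hT : IsClosed T) (hne : (T ∩ Ici x).Nonempty) (hx : x ∉ T) : x < gapRight T x :=
  gapLeft_lt (α := αᵒᵈ) hT hne hx

lemma tendsto_gapLeft_iUnion {S : ℕ → Set α} (hS : Monotone S)
    (hne : (S 0 ∩ Iic x).Nonempty)
    (hx : x ∈ closure (⋃ n, S n) → x ∈ closure (closure (⋃ n, S n) ∩ Iio x)) :
    Tendsto (fun n => gapLeft (S n) x) atTop (𝓝 (gapLeft (closure (⋃ n, S n)) x)) := by
  set U := ⋃ n, S n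
  have hne' n : (S n ∩ Iic x).Nonempty := hne.mono (inter_subset_inter_left _ (hS (Nat.zero_le n)))
  have hmono : Monotone fun n => gapLeft (S n) x := fun m n hmn =>
    csSup_le_csSup ⟨x, fun _ hy => hy.2⟩ (hne' m) (inter_subset_inter_left _ (hS hmn))
  have hbdd : BddAbove (range fun n => gapLeft (S n) x) :=
    ⟨x, forall_mem_range.2 fun n => gapLeft_le (hne' n)⟩
  set A := ⨆ n, gapLeft (S n) x
  have hgapU : Disjoint (Ioo A x) U := by
    refine disjoint_left.2 fun u hu huU => ?_
    obtain ⟨m, hm⟩ := mem_iUnion.1 huU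
    exact hu.1.not_ge ((le_gapLeft hm hu.2.le).trans (le_ciSup hbdd m))
  have hgap : Disjoint (Ioo A x) (closure U) := hgapU.closure_right isOpen_Ioo
  suffices gapLeft (closure U) x = A from this ▸ tendsto_atTop_ciSup hmono hbdd
  refine le_antisymm (csSup_le ((hne' 0).mono ?_) fun z hz => ?_) (ciSup_le fun n => ?_)
  · exact inter_subset_inter_left _ ((subset_iUnion S 0).trans subset_closure)
  · by_contra! hAz
    rcases hz.2.lt_or_eq with hzx | rfl
    · exact disjoint_left.1 hgap ⟨hAz, hzx⟩ hz.1
    · obtain ⟨w, hwA, hw⟩ := mem_closure_iff.1 (hx hz.1) _ isOpen_Ioi hAz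
      exact disjoint_left.1 hgap ⟨hwA, hw.2⟩ hw.1
  · exact csSup_le_csSup ⟨x, fun _ hy => hy.2⟩ (hne' n)
      (inter_subset_inter_left _ ((subset_iUnion S n).trans subset_closure))

lemma tendsto_gapRight_iUnion {S : ℕ → Set α} (hS : Monotone S)
    (hne : (S 0 ∩ Ici x).Nonempty)
    (hx : x ∈ closure (⋃ n, S n) → x ∈ closure (closure (⋃ n, S n) ∩ Ioi x)) :
    Tendsto (fun n => gapRight (S n) x) atTop (𝓝 (gapRight (closure (⋃ n, S n)) x)) :=
  tendsto_gapLeft_iUnion (α := αᵒᵈ) hS hne hx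

lemma mem_Ioo_gapLeft_gapRight (hT : IsClosed T) (hl : (T ∩ Iic x).Nonempty)
    (hr : (T ∩ Ici x).Nonempty) (hx : x ∉ T) : x ∈ Ioo (gapLeft T x) (gapRight T x) :=
  ⟨gapLeft_lt hT hl hx, lt_gapRight hT hr hx⟩

lemma connectedComponentIn_Icc_diff_eq_Ioo [DenselyOrdered α] {a b : α} (hT : IsClosed T)
    (ha : a ∈ T) (hb : b ∈ T) (hx : x ∈ Icc a b \ T) :
    connectedComponentIn (Icc a b \ T) x = Ioo (gapLeft T x) (gapRight T x) := by
  obtain ⟨hl, hr⟩ := mem_Ioo_gapLeft_gapRight hT ⟨a, ha, hx.1.1⟩ ⟨b, hb, hx.1.2⟩ hx.2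
  refine subset_antisymm (fun y hy => ?_) (isPreconnected_Ioo.subset_connectedComponentIn ⟨hl, hr⟩
    fun y hy => ⟨⟨(le_gapLeft ha hx.1.1).trans hy.1.le, hy.2.le.trans (gapRight_le hb hx.1.2)⟩,
      fun hyT => ?_⟩)
  · have hC : OrdConnected (connectedComponentIn (Icc a b \ T) x) :=
      isPreconnected_connectedComponentIn.ordConnected
    have hxC := mem_connectedComponentIn hx
    have hCT := connectedComponentIn_subset (Icc a b \ T) x
    refine ⟨lt_of_not_ge fun h => ?_, lt_of_not_ge fun h => ?_⟩
    · exact (hCT (hC.out hy hxC ⟨h, hl.le⟩)).2 (gapLeft_mem hT ⟨a, ha, hx.1.1⟩)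
    · exact (hCT (hC.out hxC hy ⟨hr.le, h⟩)).2 (gapRight_mem hT ⟨b, hb, hx.1.2⟩)
  · rcases le_total y x with hyx | hxy
    · exact hy.1.not_ge (le_gapLeft hyT hyx)
    · exact hy.2.not_ge (gapRight_le hyT hxy)

end Gap

section IsolatedPoints

variable {α : Type*} [LinearOrder α] [TopologicalSpace α] [OrderTopology α]
  [SecondCountableTopology α] [MeasurableSpace α] (μ : Measure α) [NullSingletonClass μ]
  (T : Set α)

lemma ae_mem_closure_inter_Iio : ∀ᵐ x ∂μ, x ∈ T → x ∈ closure (T ∩ Iio x) := by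
  filter_upwards [countable_setOfPred_isolated_left_within.ae_notMem μ] with x hx hxT
  exact mem_closure_iff_nhdsWithin_neBot.2 ⟨fun h => hx ⟨hxT, h⟩⟩

lemma ae_mem_closure_inter_Ioi : ∀ᵐ x ∂μ, x ∈ T → x ∈ closure (T ∩ Ioi x) := by
  filter_upwards [countable_setOfPred_isolated_right_within.ae_notMem μ] with x hx hxT
  exact mem_closure_iff_nhdsWithin_neBot.2 ⟨fun h => hx ⟨hxT, h⟩⟩

end IsolatedPoints

section IntervalAverage

variable {E : Type*} [NormedAddCommGroup E] [NormedSpace ℝ E] {f : ℝ → E}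

lemma tendsto_intervalAverage {ι : Type*} {l : Filter ι} {a b : ι → ℝ} {a₀ b₀ : ℝ}
    (hf : ∀ a b, IntervalIntegrable f volume a b) (ha : Tendsto a l (𝓝 a₀))
    (hb : Tendsto b l (𝓝 b₀)) (hab : a₀ ≠ b₀) :
    Tendsto (fun i => ⨍ y in a i..b i, f y) l (𝓝 (⨍ y in a₀..b₀, f y)) := by
  have hF := intervalIntegral.continuous_primitive hf 0
  have hI := ((hF.tendsto b₀).comp hb).sub ((hF.tendsto a₀).comp ha)
  simp only [Function.comp_def, intervalIntegral.integral_interval_sub_left (hf 0 _) (hf 0 _)] at hI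
  simpa only [interval_average_eq] using ((hb.sub ha).inv₀ (sub_ne_zero.2 hab.symm)).smul hI

lemma ae_tendsto_intervalAverage [CompleteSpace E] (hf : LocallyIntegrable f volume) :
    ∀ᵐ x, ∀ {ι : Type*} {l : Filter ι} (a b : ι → ℝ), Tendsto a l (𝓝 x) → Tendsto b l (𝓝 x) →
      (∀ᶠ i in l, a i < b i ∧ x ∈ Icc (a i) (b i)) →
      Tendsto (fun i => ⨍ y in a i..b i, f y) l (𝓝 (f x)) := by
  filter_upwards [IsUnifLocDoublingMeasure.ae_tendsto_average (μ := volume) hf 1]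
    with x hx ι l a b ha hb hab
  have hδ : Tendsto (fun i => (b i - a i) / 2) l (𝓝[>] 0) :=
    tendsto_nhdsWithin_of_tendsto_nhds_of_eventually_within _
      (by simpa using (hb.sub ha).div_const 2) (hab.mono fun i hi => by simp [hi.1])
  refine (hx (fun i => (a i + b i) / 2) _ hδ (hab.mono fun i hi => ?_)).congr'
    (hab.mono fun i hi => ?_)
  · rw [one_mul, Real.closedBall_eq_Icc]
    constructor <;> linarith [hi.2.1, hi.2.2]
  · have hball : Metric.closedBall ((a i + b i) / 2) ((b i - a i) / 2) = Icc (a i) (b i) := by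
      rw [Real.closedBall_eq_Icc]; congr 1 <;> ring
    dsimp only
    rw [hball, uIoc_of_le hi.1.le, setAverage_congr Ioc_ae_eq_Icc]

end IntervalAverage

lemma condExpSet_eq_intervalAverage {d : ℕ} {T : Set ℝ} {ψ : ℝ → EuclideanSpace ℝ (Fin d)} {x : ℝ}
    (hT : IsClosed T) (h0 : (0 : ℝ) ∈ T) (h1 : (1 : ℝ) ∈ T) (hx : x ∈ Icc (0 : ℝ) 1 \ T) :
    condExpSet T ψ x = ⨍ y in gapLeft T x..gapRight T x, (Icc (0 : ℝ) 1).indicator ψ y := by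
  have hle : gapLeft T x ≤ gapRight T x :=
    (gapLeft_le ⟨0, h0, hx.1.1⟩).trans (le_gapRight ⟨1, h1, hx.1.2⟩)
  rw [condExpSet, if_neg hx.2, connectedComponentIn_Icc_diff_eq_Ioo hT h0 h1 hx, uIoc_of_le hle,
    ← setAverage_congr Ioo_ae_eq_Ioc]
  refine setAverage_congr_fun measurableSet_Ioo (Eventually.of_forall fun y hy => ?_)
  exact (indicator_of_mem (show y ∈ Icc (0 : ℝ) 1 from ⟨(le_gapLeft h0 hx.1.1).trans hy.1.le,
    hy.2.le.trans (gapRight_le h1 hx.1.2)⟩) ψ).symm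

theorem condExpSet_tendsto_ae_general
    (d : ℕ) (S : ℕ → Set ℝ)
    (hclosed : ∀ n, IsClosed (S n))
    (hmono : ∀ n, S n ⊆ S (n+1))
    (h01 : ∀ n, (0:ℝ) ∈ S n ∧ (1:ℝ) ∈ S n)
    (ψ : ℝ → EuclideanSpace ℝ (Fin d))
    (hψ : IntegrableOn ψ (Set.Icc (0:ℝ) 1)) :
    ∀ᵐ x ∂(volume.restrict (Set.Icc (0:ℝ) 1)),
      Tendsto (fun n => condExpSet (S n) ψ x) atTop
        (nhds (condExpSet (closure (⋃ n, S n)) ψ x)) := by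
  have hS : Monotone S := monotone_nat_of_le_succ hmono
  set U := ⋃ n, S n
  have hψ' := (integrable_indicator_iff measurableSet_Icc).2 hψ
  filter_upwards [ae_restrict_mem measurableSet_Icc,
    ae_restrict_of_ae (ae_tendsto_intervalAverage hψ'.locallyIntegrable),
    ae_restrict_of_ae (ae_mem_closure_inter_Iio volume (closure U)),
    ae_restrict_of_ae (ae_mem_closure_inter_Ioi volume (closure U))] with x hxI hxLeb hxl hxr
  by_cases hxU : x ∈ U
  · obtain ⟨m, hm⟩ := mem_iUnion.1 hxU
    rw [condExpSet, if_pos (subset_closure hxU)]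
    exact tendsto_const_nhds.congr' <|
      eventually_atTop.2 ⟨m, fun n hn => (if_pos (hS hn hm)).symm⟩
  have hxS n : x ∈ Icc (0 : ℝ) 1 \ S n := ⟨hxI, fun h => hxU (mem_iUnion.2 ⟨n, h⟩)⟩
  have hl := tendsto_gapLeft_iUnion hS ⟨0, (h01 0).1, hxI.1⟩ hxl
  have hr := tendsto_gapRight_iUnion hS ⟨1, (h01 0).2, hxI.2⟩ hxr
  simp only [condExpSet_eq_intervalAverage (hclosed _) (h01 _).1 (h01 _).2 (hxS _)]
  by_cases hxcl : x ∈ closure U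
  · rw [gapLeft_of_mem hxcl] at hl
    rw [gapRight_of_mem hxcl] at hr
    rw [condExpSet, if_pos hxcl, ← indicator_of_mem hxI ψ]
    refine hxLeb _ _ hl hr (Eventually.of_forall fun n => ?_)
    obtain ⟨hln, hrn⟩ := mem_Ioo_gapLeft_gapRight (hclosed n) ⟨0, (h01 n).1, hxI.1⟩
      ⟨1, (h01 n).2, hxI.2⟩ (hxS n).2
    exact ⟨hln.trans hrn, hln.le, hrn.le⟩
  · have h0 : (0 : ℝ) ∈ closure U := subset_closure (mem_iUnion.2 ⟨0, (h01 0).1⟩)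
    have h1 : (1 : ℝ) ∈ closure U := subset_closure (mem_iUnion.2 ⟨0, (h01 0).2⟩)
    rw [condExpSet_eq_intervalAverage isClosed_closure h0 h1 ⟨hxI, hxcl⟩]
    obtain ⟨hlx, hxr⟩ :=
      mem_Ioo_gapLeft_gapRight isClosed_closure ⟨0, h0, hxI.1⟩ ⟨1, h1, hxI.2⟩ hxcl
    exact tendsto_intervalAverage (fun _ _ => hψ'.intervalIntegrable) hl hr (hlx.trans hxr).ne

theorem condExpSet_tendsto_ae
    (d : ℕ) (S : ℕ → Set ℝ)
    (hclosed : ∀ n, IsClosed (S n))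
    (hsub : ∀ n, S n ⊆ Set.Icc (0:ℝ) 1)
    (hmono : ∀ n, S n ⊆ S (n+1))
    (h01 : ∀ n, (0:ℝ) ∈ S n ∧ (1:ℝ) ∈ S n)
    (ψ : ℝ → EuclideanSpace ℝ (Fin d))
    (hψ : IntegrableOn ψ (Set.Icc (0:ℝ) 1)) :
    ∀ᵐ x ∂(volume.restrict (Set.Icc (0:ℝ) 1)),
      Tendsto (fun n => condExpSet (S n) ψ x) atTop
        (nhds (condExpSet (closure (⋃ n, S n)) ψ x)) :=
  condExpSet_tendsto_ae_general d S hclosed hmono h01 ψ hψ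
end

section
/- Let Ω_O ⊆ ℝ², and for ε, λ > 0 let Ω_I = ⋃_{n∈ℤ} {x ∈ ℝ² : x₁ = λn, x₂ ≥ λ²n² + ε²}. Then conv(Ω_I) = {x ∈ ℝ² : x₂ ≥ g(x₁)}, where g is the piecewise-linear function interpolating the points (λn, λ²n² + ε²), n ∈ ℤ. In particular, conv(Ω_I) is closed and its boundary contains no rays. -/
/-!
The function `g = interpG ε λ` is the pointwise maximum of its chords `ℓₘ` through consecutive
nodes `(λm, λ²m² + ε²)` and `(λ(m+1), λ²(m+1)² + ε²)`, the maximum being attained by the chord of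
the cell containing the point; hence `g` is convex and continuous, and its epigraph is a closed
convex set containing the rays. Conversely, a point above `g` over the cell `[λn, λ(n+1)]` is a
convex combination of two points on the rays at `λn` and `λ(n+1)`, raised by the same height.
Finally the frontier of the epigraph lies on the graph, and `g(t) ≥ t²` grows faster than any
affine function along a non-vertical ray, while a vertical ray leaves the graph immediately.
-/

open Set

/-- The piecewise-linear function interpolating the points `(λn, λ²n² + ε²)`, `n ∈ ℤ`. -/
noncomputable def interpG (ε lam t : ℝ) : ℝ :=
  (lam * (⌊t / lam⌋ : ℝ))^2 + ε^2 + lam * (2 * (⌊t / lam⌋ : ℝ) + 1) * (t - lam * (⌊t / lam⌋ : ℝ))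

/-- The chord of `interpG` through its nodes at `λm` and `λ(m + 1)`. -/
noncomputable def interpChord (ε lam : ℝ) (m : ℤ) (t : ℝ) : ℝ :=
  (lam * m) ^ 2 + ε ^ 2 + lam * (2 * m + 1) * (t - lam * m)

theorem sub_mul_floor_div_mem_Ico {k : Type*} [Field k] [LinearOrder k] [IsOrderedRing k]
    [FloorRing k] {b : k} (hb : 0 < b) (a : k) : a - b * ⌊a / b⌋ ∈ Ico 0 b := by
  rw [mul_comm]
  exact ⟨Int.sub_floor_div_mul_nonneg a hb, Int.sub_floor_div_mul_lt a hb⟩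

section Interp

variable {ε lam : ℝ}

theorem interpG_eq_interpChord_floor (ε lam t : ℝ) :
    interpG ε lam t = interpChord ε lam ⌊t / lam⌋ t :=
  rfl

theorem interpChord_mul_add_mul (ε lam : ℝ) (m : ℤ) {a b : ℝ} (hab : a + b = 1) (x y : ℝ) :
    interpChord ε lam m (a * x + b * y)
      = a * interpChord ε lam m x + b * interpChord ε lam m y := by
  obtain rfl : b = 1 - a := by linarith
  simp only [interpChord]
  ring

theorem interpChord_le_interpG (hlam : 0 < lam) (m : ℤ) (t : ℝ) :
    interpChord ε lam m t ≤ interpG ε lam t := by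
  rw [interpG_eq_interpChord_floor]
  obtain ⟨hs0, hs1⟩ := sub_mul_floor_div_mem_Ico hlam t
  set n := ⌊t / lam⌋
  set s := t - lam * n
  have hdiff : interpChord ε lam n t - interpChord ε lam m t
      = lam * (n - m) * (lam * (n - m - 1) + 2 * s) := by
    simp only [interpChord, s]
    ring
  rw [← sub_nonneg, hdiff]
  rcases lt_trichotomy n m with h | rfl | h
  · have hk : (n : ℝ) + 1 ≤ m := by exact_mod_cast Int.add_one_le_of_lt h
    exact mul_nonneg_of_nonpos_of_nonpos (by nlinarith) (by nlinarith)
  · simp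
  · have hk : (m : ℝ) + 1 ≤ n := by exact_mod_cast Int.add_one_le_of_lt h
    exact mul_nonneg (by nlinarith) (by nlinarith)

theorem interpG_mul_intCast (hlam : lam ≠ 0) (n : ℤ) :
    interpG ε lam (lam * n) = (lam * n) ^ 2 + ε ^ 2 := by
  rw [interpG_eq_interpChord_floor, mul_div_cancel_left₀ _ hlam, Int.floor_intCast]
  simp [interpChord]

theorem convexOn_interpG (hlam : 0 < lam) : ConvexOn ℝ univ (interpG ε lam) := by
  refine ⟨convex_univ, fun x _ y _ a b ha hb hab => ?_⟩
  simp only [smul_eq_mul]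
  rw [interpG_eq_interpChord_floor, interpChord_mul_add_mul ε lam _ hab]
  gcongr <;> exact interpChord_le_interpG hlam _ _

theorem continuous_interpG (hlam : 0 < lam) : Continuous (interpG ε lam) :=
  continuousOn_univ.1 ((convexOn_interpG hlam).continuousOn isOpen_univ)

theorem sq_add_sq_le_interpG (hlam : 0 < lam) (t : ℝ) : t ^ 2 + ε ^ 2 ≤ interpG ε lam t := by
  rw [interpG_eq_interpChord_floor]
  obtain ⟨hs0, hs1⟩ := sub_mul_floor_div_mem_Ico hlam t
  set n := ⌊t / lam⌋
  have hdiff : interpChord ε lam n t - (t ^ 2 + ε ^ 2) = (t - lam * n) * (lam - (t - lam * n)) := by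
    simp only [interpChord]
    ring
  nlinarith

theorem convexHull_verticalRays (hlam : 0 < lam) :
    convexHull ℝ {x : ℝ × ℝ | ∃ n : ℤ, x.1 = lam * n ∧ (lam * n) ^ 2 + ε ^ 2 ≤ x.2}
      = {x : ℝ × ℝ | interpG ε lam x.1 ≤ x.2} := by
  set Ω := {x : ℝ × ℝ | ∃ n : ℤ, x.1 = lam * n ∧ (lam * n) ^ 2 + ε ^ 2 ≤ x.2}
  refine (convexHull_min ?_ ?_).antisymm ?_
  · rintro _ ⟨n, h1, h2⟩
    rwa [mem_ofPred_eq, h1, interpG_mul_intCast hlam.ne']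
  · simpa using (convexOn_interpG (ε := ε) hlam).convex_epigraph
  rintro ⟨t, y⟩ (hy : interpG ε lam t ≤ y)
  obtain ⟨hs0, hs1⟩ := sub_mul_floor_div_mem_Ico hlam t
  set n := ⌊t / lam⌋
  obtain ⟨θ, hθ, hθ0, hθ1⟩ : ∃ θ : ℝ, θ * lam = t - lam * n ∧ 0 ≤ θ ∧ θ ≤ 1 :=
    ⟨(t - lam * n) / lam, div_mul_cancel₀ _ hlam.ne', div_nonneg hs0 hlam.le,
      (div_le_one hlam).2 hs1.le⟩
  obtain ⟨δ, hδ, hδ0⟩ : ∃ δ : ℝ, y = interpG ε lam t + δ ∧ 0 ≤ δ := ⟨y - interpG ε lam t, by ring,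
    sub_nonneg.2 hy⟩
  have hlow : (lam * n, (lam * n) ^ 2 + ε ^ 2 + δ) ∈ Ω := ⟨n, rfl, by simpa using hδ0⟩
  have hhigh : (lam * (n + 1), (lam * (n + 1)) ^ 2 + ε ^ 2 + δ) ∈ Ω :=
    ⟨n + 1, by push_cast; ring, by push_cast; simpa using hδ0⟩
  convert convex_convexHull ℝ Ω (subset_convexHull ℝ Ω hlow) (subset_convexHull ℝ Ω hhigh)
    (sub_nonneg.2 hθ1) hθ0 (sub_add_cancel 1 θ) using 1
  have hg : interpG ε lam t = (lam * n) ^ 2 + ε ^ 2 + lam * (2 * n + 1) * (t - lam * n) := rfl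
  ext <;> simp only [Prod.smul_mk, Prod.mk_add_mk, smul_eq_mul]
  · linear_combination (-1 : ℝ) * hθ
  · linear_combination hδ + hg - lam * (2 * n + 1) * hθ

end Interp

theorem eq_zero_of_sq_le_affine {a b c d : ℝ} (h : ∀ α : ℝ, 0 ≤ α → (a + α * b) ^ 2 ≤ c + α * d) :
    b = 0 := by
  by_contra hb
  have hb2 : 0 < b ^ 2 := by positivity
  set K := |2 * a * b - d| + |a ^ 2 - c| + 1
  set α := K / b ^ 2 + 1
  have hα1 : 1 ≤ α := le_add_of_nonneg_left (by positivity)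
  have hα : b ^ 2 * α = K + b ^ 2 := by simp only [α]; field_simp
  have hexpand : (a + α * b) ^ 2 - (c + α * d)
      = (a ^ 2 - c) + α * (2 * a * b - d) + α * (K + b ^ 2) := by
    rw [← hα]; ring
  have h1 : α * -|2 * a * b - d| ≤ α * (2 * a * b - d) :=
    mul_le_mul_of_nonneg_left (neg_abs_le _) (by linarith)
  have h2 : |a ^ 2 - c| + 1 ≤ α * (|a ^ 2 - c| + 1) := by nlinarith [abs_nonneg (a ^ 2 - c)]
  have h3 : 0 ≤ α * b ^ 2 := by positivity
  nlinarith [h α (by linarith), neg_abs_le (a ^ 2 - c)]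

theorem ray_not_subset_frontier_epigraph {f : ℝ → ℝ} (hf : Continuous f)
    (hsq : ∀ t, t ^ 2 ≤ f t) {x e : ℝ × ℝ} (he : e ≠ 0) :
    ¬ (fun α : ℝ => x + α • e) '' Ici 0 ⊆ frontier {p : ℝ × ℝ | f p.1 ≤ p.2} := by
  intro hray
  have hgraph (α : ℝ) (hα : 0 ≤ α) : f (x.1 + α * e.1) = x.2 + α * e.2 := by
    simpa using frontier_le_subset_eq (hf.comp continuous_fst) continuous_snd (hray ⟨α, hα, rfl⟩)
  have he1 : e.1 = 0 :=
    eq_zero_of_sq_le_affine fun α hα => (hsq _).trans (hgraph α hα).le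
  have h0 := hgraph 0 le_rfl
  have h1 := hgraph 1 zero_le_one
  simp only [he1, mul_zero, add_zero, zero_mul, one_mul] at h0 h1
  exact he (Prod.ext he1 (by rw [Prod.snd_zero]; linarith))

theorem convexHull_of_vertical_rays_general
    (ε lam : ℝ) (hlam : 0 < lam)
    (ΩI : Set (ℝ × ℝ))
    (hΩI : ΩI = {x : ℝ × ℝ | ∃ n : ℤ, x.1 = lam * n ∧ (lam * n)^2 + ε^2 ≤ x.2}) :
    convexHull ℝ ΩI = {x : ℝ × ℝ | interpG ε lam x.1 ≤ x.2} ∧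
    IsClosed (convexHull ℝ ΩI) ∧
    (∀ (x e : ℝ × ℝ), e ≠ 0 →
      ¬ ((fun α : ℝ => x + α • e) '' Set.Ici 0 ⊆ frontier (convexHull ℝ ΩI))) := by
  have hull : convexHull ℝ ΩI = {x : ℝ × ℝ | interpG ε lam x.1 ≤ x.2} :=
    hΩI ▸ convexHull_verticalRays hlam
  have hcont := continuous_interpG (ε := ε) hlam
  refine ⟨hull, hull ▸ isClosed_le (hcont.comp continuous_fst) continuous_snd, fun x e he => ?_⟩
  rw [hull]
  exact ray_not_subset_frontier_epigraph hcont
    (fun t => (le_add_of_nonneg_right (sq_nonneg ε)).trans (sq_add_sq_le_interpG hlam t)) he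

theorem convexHull_of_vertical_rays
    (ε lam : ℝ) (hε : 0 < ε) (hlam : 0 < lam)
    (ΩI : Set (ℝ × ℝ))
    (hΩI : ΩI = {x : ℝ × ℝ | ∃ n : ℤ, x.1 = lam * n ∧ (lam * n)^2 + ε^2 ≤ x.2}) :
    convexHull ℝ ΩI = {x : ℝ × ℝ | interpG ε lam x.1 ≤ x.2} ∧
    IsClosed (convexHull ℝ ΩI) ∧
    (∀ (x e : ℝ × ℝ), e ≠ 0 →
      ¬ ((fun α : ℝ => x + α • e) '' Set.Ici 0 ⊆ frontier (convexHull ℝ ΩI))) :=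
  convexHull_of_vertical_rays_general ε lam hlam ΩI hΩI
end

section
/- Fix ε, λ, μ > 0 with μλ < log((1 + √(1 + 4ε²/λ²))/(−1 + √(1 + 4ε²/λ²))). Set a = 1 − λ/(λ/2 + √(λ²/4 + ε²)). Then a ∈ (0,1), and the function φ : (0,1] → ℝ defined by φ(t) = (n + 1/2)λ − √(λ²/4 + ε²) for t ∈ (a^{n+1}, a^n], n ≥ 0, satisfies: e^{μφ} is integrable on (0,1], and ∫₀¹ e^{μφ(t)} dt = (λ / (λ/2 + √(λ²/4+ε²) + (λ/2 − √(λ²/4+ε²))e^{λμ})) · e^{μ(λ/2 − √(λ²/4+ε²))}. -/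
open Set MeasureTheory
open scoped Function

/-!
Write `s = √(λ²/4 + ε²)`, so that `a = (s - λ/2)/(s + λ/2)`. On the piece `(a^(n+1), a^n]`,
of length `(1 - a) a^n`, the integrand is the constant `exp(μ(λ/2 - s)) · exp(μλ)^n`, so the
integral is a geometric series with ratio `a · exp(μλ)`. The argument of the logarithm in the
hypothesis simplifies to `(s + λ/2)/(s - λ/2) = 1/a`, so the hypothesis says exactly that this
ratio is `< 1`.
-/

section GeometricPartition

variable {a : ℝ}

lemma pairwise_disjoint_Ioc_pow_succ_pow (ha0 : 0 ≤ a) (ha1 : a ≤ 1) :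
    Pairwise (Disjoint on fun n : ℕ => Ioc (a ^ (n + 1)) (a ^ n)) := by
  simpa only [Order.succ_eq_add_one] using (pow_right_anti₀ ha0 ha1).pairwise_disjoint_on_Ioc_succ

lemma iUnion_Ioc_pow_succ_pow (ha0 : 0 < a) (ha1 : a < 1) :
    ⋃ n : ℕ, Ioc (a ^ (n + 1)) (a ^ n) = Ioc 0 1 := by
  ext t
  simp only [mem_iUnion, mem_Ioc]
  constructor
  · rintro ⟨n, hlow, hup⟩
    exact ⟨(pow_pos ha0 _).trans hlow, hup.trans (pow_le_one₀ ha0.le ha1.le)⟩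
  · rintro ⟨ht0, ht1⟩
    exact exists_nat_pow_near_of_lt_one ht0 ht1 ha0 ha1

lemma volume_real_Ioc_pow_succ_pow (ha0 : 0 ≤ a) (ha1 : a ≤ 1) (n : ℕ) :
    volume.real (Ioc (a ^ (n + 1)) (a ^ n)) = (1 - a) * a ^ n := by
  rw [Real.volume_real_Ioc_of_le (pow_le_pow_of_le_one ha0 ha1 n.le_succ), pow_succ]
  ring

theorem integrableOn_Ioc_zero_one_and_integral_eq_of_geometric_step {f : ℝ → ℝ} {c r : ℝ}
    (ha0 : 0 < a) (ha1 : a < 1) (har : |a * r| < 1)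
    (hf : ∀ n : ℕ, ∀ t ∈ Ioc (a ^ (n + 1)) (a ^ n), f t = c * r ^ n) :
    IntegrableOn f (Ioc 0 1) ∧ ∫ t in Ioc 0 1, f t = c * (1 - a) / (1 - a * r) := by
  set S : ℕ → Set ℝ := fun n => Ioc (a ^ (n + 1)) (a ^ n)
  have hmeas : ∀ n, MeasurableSet (S n) := fun _ => measurableSet_Ioc
  have hpiece : ∀ n, ∫ t in S n, f t = c * (1 - a) * (a * r) ^ n := fun n => by
    rw [setIntegral_congr_fun (hmeas n) (hf n), setIntegral_const,
      volume_real_Ioc_pow_succ_pow ha0.le ha1.le, smul_eq_mul, mul_pow]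
    ring
  have hpiece_norm : ∀ n, ∫ t in S n, ‖f t‖ = |c| * (1 - a) * |a * r| ^ n := fun n => by
    rw [setIntegral_congr_fun (hmeas n) fun t ht => by rw [hf n t ht], setIntegral_const,
      volume_real_Ioc_pow_succ_pow ha0.le ha1.le, smul_eq_mul, norm_mul, norm_pow,
      Real.norm_eq_abs, Real.norm_eq_abs, abs_mul, mul_pow, abs_of_pos ha0]
    ring
  have hint : IntegrableOn f (⋃ n, S n) := by
    refine integrableOn_iUnion_of_summable_integral_norm (fun n => ?_) ?_
    · exact (integrableOn_const measure_Ioc_lt_top.ne).congr_fun (fun t ht => (hf n t ht).symm)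
        (hmeas n)
    · simpa only [hpiece_norm] using
        (summable_geometric_of_abs_lt_one (by rwa [abs_abs])).mul_left (|c| * (1 - a))
  have hsum := hasSum_integral_iUnion hmeas (pairwise_disjoint_Ioc_pow_succ_pow ha0.le ha1.le) hint
  simp only [hpiece] at hsum
  rw [iUnion_Ioc_pow_succ_pow ha0 ha1] at hint hsum
  refine ⟨hint, hsum.unique ?_⟩
  simpa only [div_eq_mul_inv] using (hasSum_geometric_of_abs_lt_one har).mul_left (c * (1 - a))

end GeometricPartition

section Parameters

variable {lam ε : ℝ}

lemma half_lt_sqrt_sq_div_four_add_sq (hε : ε ≠ 0) : lam / 2 < √(lam ^ 2 / 4 + ε ^ 2) :=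
  Real.lt_sqrt_of_sq_lt (by nlinarith [sq_pos_of_ne_zero hε])

lemma sqrt_one_add_four_mul_sq_div_sq (hlam : 0 < lam) :
    √(1 + 4 * ε ^ 2 / lam ^ 2) = 2 * √(lam ^ 2 / 4 + ε ^ 2) / lam := by
  have hsq : 1 + 4 * ε ^ 2 / lam ^ 2 = (2 * √(lam ^ 2 / 4 + ε ^ 2) / lam) ^ 2 := by
    rw [div_pow, mul_pow, Real.sq_sqrt (by positivity)]
    field_simp
    ring
  rw [hsq, Real.sqrt_sq (by positivity)]

lemma one_add_div_div_neg_one_add_div (hlam : lam ≠ 0) (s : ℝ) :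
    (1 + 2 * s / lam) / (-1 + 2 * s / lam) = (s + lam / 2) / (s - lam / 2) := by
  rw [← mul_div_mul_right _ _ (div_ne_zero hlam two_ne_zero)]
  congr 1 <;> field_simp <;> ring

lemma sub_mul_exp_lt_add_of_lt_log {μ : ℝ} (hε : ε ≠ 0) (hlam : 0 < lam)
    (hcond : μ * lam < Real.log ((1 + √(1 + 4 * ε ^ 2 / lam ^ 2)) /
      (-1 + √(1 + 4 * ε ^ 2 / lam ^ 2)))) :
    (√(lam ^ 2 / 4 + ε ^ 2) - lam / 2) * Real.exp (μ * lam) <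
      √(lam ^ 2 / 4 + ε ^ 2) + lam / 2 := by
  set s := √(lam ^ 2 / 4 + ε ^ 2)
  have hs : lam / 2 < s := half_lt_sqrt_sq_div_four_add_sq hε
  rw [sqrt_one_add_four_mul_sq_div_sq hlam, one_add_div_div_neg_one_add_div hlam.ne',
    Real.lt_log_iff_exp_lt (by apply div_pos <;> linarith)] at hcond
  rwa [← lt_div_iff₀' (by linarith)]

lemma mul_one_sub_div_div_one_sub_div_mul {s : ℝ} (hs : s + lam / 2 ≠ 0) (C E : ℝ) :
    C * (1 - (s - lam / 2) / (s + lam / 2)) / (1 - (s - lam / 2) / (s + lam / 2) * E) =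
      lam / (lam / 2 + s + (lam / 2 - s) * E) * C := by
  have hone_sub : 1 - (s - lam / 2) / (s + lam / 2) = lam / (s + lam / 2) := by
    rw [one_sub_div hs]
    ring
  have hone_sub_mul : 1 - (s - lam / 2) / (s + lam / 2) * E =
      (lam / 2 + s + (lam / 2 - s) * E) / (s + lam / 2) := by
    rw [div_mul_eq_mul_div, one_sub_div hs]
    ring
  rw [hone_sub, hone_sub_mul, mul_div_assoc, div_div_div_cancel_right₀ hs, mul_comm]

end Parameters

theorem extremal_step_function_integral_general
    (ε lam μ a : ℝ) (hε : 0 < ε) (hlam : 0 < lam)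
    (hcond : μ * lam < Real.log ((1 + Real.sqrt (1 + 4 * ε^2 / lam^2)) /
      (-1 + Real.sqrt (1 + 4 * ε^2 / lam^2))))
    (ha : a = 1 - lam / (lam / 2 + Real.sqrt (lam^2 / 4 + ε^2)))
    (φ : ℝ → ℝ)
    (hφ : ∀ n : ℕ, ∀ t ∈ Set.Ioc (a^(n+1)) (a^n),
      φ t = ((n : ℝ) + 1/2) * lam - Real.sqrt (lam^2 / 4 + ε^2)) :
    a ∈ Set.Ioo (0:ℝ) 1 ∧
    IntegrableOn (fun t => Real.exp (μ * φ t)) (Set.Ioc (0:ℝ) 1) ∧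
    ∫ t in Set.Ioc (0:ℝ) 1, Real.exp (μ * φ t) =
      (lam / (lam / 2 + Real.sqrt (lam^2 / 4 + ε^2) +
        (lam / 2 - Real.sqrt (lam^2 / 4 + ε^2)) * Real.exp (lam * μ))) *
      Real.exp (μ * (lam / 2 - Real.sqrt (lam^2 / 4 + ε^2))) := by
  have hr := sub_mul_exp_lt_add_of_lt_log hε.ne' hlam hcond
  set s := √(lam ^ 2 / 4 + ε ^ 2)
  have hs : lam / 2 < s := half_lt_sqrt_sq_div_four_add_sq hε.ne'
  have hs_add : s + lam / 2 ≠ 0 := by linarith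
  have ha' : a = (s - lam / 2) / (s + lam / 2) := by
    rw [ha, add_comm (lam / 2), one_sub_div hs_add]
    ring
  have ha0 : 0 < a := by rw [ha']; apply div_pos <;> linarith
  have ha1 : a < 1 := by rw [ha', div_lt_one (by linarith)]; linarith
  have hstep : ∀ n : ℕ, ∀ t ∈ Ioc (a ^ (n + 1)) (a ^ n),
      Real.exp (μ * φ t) = Real.exp (μ * (lam / 2 - s)) * Real.exp (μ * lam) ^ n := by
    intro n t ht
    rw [hφ n t ht, ← Real.exp_nat_mul, ← Real.exp_add]
    ring_nf
  have hratio : |a * Real.exp (μ * lam)| < 1 := by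
    rwa [abs_of_pos (by positivity), ha', div_mul_eq_mul_div, div_lt_one (by linarith)]
  obtain ⟨hint, hval⟩ :=
    integrableOn_Ioc_zero_one_and_integral_eq_of_geometric_step ha0 ha1 hratio hstep
  refine ⟨⟨ha0, ha1⟩, hint, hval.trans ?_⟩
  rw [ha', mul_one_sub_div_div_one_sub_div_mul hs_add, mul_comm lam μ]

theorem extremal_step_function_integral
    (ε lam μ a : ℝ) (hε : 0 < ε) (hlam : 0 < lam) (hμ : 0 < μ)
    (hcond : μ * lam < Real.log ((1 + Real.sqrt (1 + 4 * ε^2 / lam^2)) /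
      (-1 + Real.sqrt (1 + 4 * ε^2 / lam^2))))
    (ha : a = 1 - lam / (lam / 2 + Real.sqrt (lam^2 / 4 + ε^2)))
    (φ : ℝ → ℝ)
    (hφ : ∀ n : ℕ, ∀ t ∈ Set.Ioc (a^(n+1)) (a^n),
      φ t = ((n : ℝ) + 1/2) * lam - Real.sqrt (lam^2 / 4 + ε^2)) :
    a ∈ Set.Ioo (0:ℝ) 1 ∧
    IntegrableOn (fun t => Real.exp (μ * φ t)) (Set.Ioc (0:ℝ) 1) ∧
    ∫ t in Set.Ioc (0:ℝ) 1, Real.exp (μ * φ t) =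
      (lam / (lam / 2 + Real.sqrt (lam^2 / 4 + ε^2) +
        (lam / 2 - Real.sqrt (lam^2 / 4 + ε^2)) * Real.exp (lam * μ))) *
      Real.exp (μ * (lam / 2 - Real.sqrt (lam^2 / 4 + ε^2))) :=
  extremal_step_function_integral_general ε lam μ a hε hlam hcond ha φ hφ
end

section
/- With a = 1 − λ/(λ/2 + √(λ²/4 + ε²)) and φ the step function φ(t) = (n+1/2)λ − √(λ²/4+ε²) on (a^{n+1}, a^n], one has ⟨φ⟩_{(0,a^n]} = nλ for every n ≥ 0, i.e., the averages of φ over the intervals (0, a^n] are exactly the points λn ∈ λℤ. -/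
open Set MeasureTheory

theorem extremal_step_function_averages
    (ε lam a : ℝ) (hε : 0 < ε) (hlam : 0 < lam)
    (ha : a = 1 - lam / (lam / 2 + Real.sqrt (lam^2 / 4 + ε^2)))
    (φ : ℝ → ℝ)
    (hφ : ∀ k : ℕ, ∀ t ∈ Set.Ioc (a^(k+1)) (a^k),
      φ t = ((k : ℝ) + 1/2) * lam - Real.sqrt (lam^2 / 4 + ε^2)) :
    IntegrableOn φ (Set.Ioc (0:ℝ) 1) ∧
    ∀ n : ℕ, (⨍ t in Set.Ioc (0:ℝ) (a^n), φ t) = (n : ℝ) * lam := by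
  set s := Real.sqrt (lam^2 / 4 + ε^2) with hsdef
  have hsq : s^2 = lam^2/4 + ε^2 := Real.sq_sqrt (by positivity)
  have hs0 : 0 ≤ s := Real.sqrt_nonneg _
  have hs2 : lam/2 < s := by nlinarith
  have hden : (0:ℝ) < lam/2 + s := by linarith
  have ha0 : 0 < a := by
    rw [ha]; have : lam / (lam/2 + s) < 1 := (div_lt_one hden).2 (by linarith)
    linarith
  have ha1 : a < 1 := by
    rw [ha]; have : 0 < lam / (lam/2 + s) := by positivity
    linarith
  have h1a : (0:ℝ) < 1 - a := by linarith
  have key : lam * a = (s - lam/2) * (1 - a) := by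
    rw [ha]; field_simp; ring
  have hpow_lt : ∀ m : ℕ, a^(m+1) < a^m := fun m => by
    rw [pow_succ]
    exact mul_lt_of_lt_one_right (pow_pos ha0 m) ha1
  have hmono : ∀ {m n : ℕ}, m ≤ n → a^n ≤ a^m := fun h =>
    pow_le_pow_of_le_one ha0.le ha1.le h
  -- the union decomposition
  have hUnion : ∀ n : ℕ, Ioc (0:ℝ) (a^n) = ⋃ k : ℕ, Ioc (a^(k+n+1)) (a^(k+n)) := by
    intro n
    ext t
    simp only [mem_Ioc, mem_iUnion]
    constructor
    · rintro ⟨ht0, htn⟩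
      have hex : ∃ k : ℕ, a^(k+n+1) < t := by
        have htend : Filter.Tendsto (fun k : ℕ => a^k) Filter.atTop (nhds 0) :=
          tendsto_pow_atTop_nhds_zero_of_lt_one ha0.le ha1
        obtain ⟨K, hK⟩ := (htend.eventually (gt_mem_nhds ht0)).exists
        exact ⟨K, lt_of_le_of_lt (hmono (by omega)) hK⟩
      classical
      refine ⟨Nat.find hex, Nat.find_spec hex, ?_⟩
      rcases Nat.eq_zero_or_pos (Nat.find hex) with h0 | hpos
      · rw [h0]; simpa using htn
      · have := Nat.find_min hex (Nat.sub_lt hpos one_pos)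
        push_neg at this
        calc t ≤ a^(Nat.find hex - 1 + n + 1) := this
          _ = a^(Nat.find hex + n) := by congr 1; omega
    · rintro ⟨k, h1, h2⟩
      exact ⟨(pow_pos ha0 _).trans h1, h2.trans (hmono (by omega))⟩
  -- integrability and value on each piece
  have hint : ∀ m : ℕ, IntegrableOn φ (Ioc (a^(m+1)) (a^m)) := fun m =>
    (integrableOn_const measure_Ioc_lt_top.ne).congr_fun
      (fun t ht => (hφ m t ht).symm) measurableSet_Ioc
  have hvol : ∀ m : ℕ, (MeasureTheory.volume (Ioc (a^(m+1)) (a^m))).toReal = a^m - a^(m+1) := by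
    intro m
    rw [Real.volume_Ioc, ENNReal.toReal_ofReal (by linarith [hpow_lt m])]
  have hval : ∀ m : ℕ, ∫ t in Ioc (a^(m+1)) (a^m), φ t
      = (((m:ℝ) + 1/2) * lam - s) * (a^m - a^(m+1)) := by
    intro m
    rw [setIntegral_congr_fun measurableSet_Ioc (hφ m), setIntegral_const, measureReal_def, hvol m,
      smul_eq_mul, mul_comm]
  have hnorm : ∀ m : ℕ, ∫ t in Ioc (a^(m+1)) (a^m), ‖φ t‖
      = ‖((m:ℝ) + 1/2) * lam - s‖ * (a^m - a^(m+1)) := by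
    intro m
    rw [setIntegral_congr_fun (g := fun _ => ‖((m:ℝ) + 1/2) * lam - s‖) measurableSet_Ioc
      (fun t ht => by rw [hφ m t ht]), setIntegral_const, measureReal_def, hvol m, smul_eq_mul, mul_comm]
  -- summability of the norms
  have hSumNorm : Summable (fun m : ℕ => ∫ t in Ioc (a^(m+1)) (a^m), ‖φ t‖) := by
    have hs1 : Summable (fun m : ℕ => lam * ((m:ℝ) * a^m)) :=
      ((hasSum_coe_mul_geometric_of_norm_lt_one
        (by rw [Real.norm_eq_abs, abs_of_pos ha0]; exact ha1)).summable).mul_left lam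
    have hs2' : Summable (fun m : ℕ => (lam + s) * a^m) :=
      (summable_geometric_of_lt_one ha0.le ha1).mul_left (lam + s)
    refine Summable.of_nonneg_of_le (fun m => ?_) (fun m => ?_) (hs1.add hs2')
    · rw [hnorm m]
      exact mul_nonneg (norm_nonneg _) (by linarith [hpow_lt m])
    · rw [hnorm m]
      have h1 : ‖((m:ℝ) + 1/2) * lam - s‖ ≤ (m:ℝ) * lam + (lam + s) := by
        rw [Real.norm_eq_abs]
        rcases abs_cases (((m:ℝ) + 1/2) * lam - s) with ⟨h, _⟩ | ⟨h, _⟩ <;> rw [h] <;>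
          nlinarith [Nat.cast_nonneg (α := ℝ) m]
      have h2 : a^m - a^(m+1) ≤ a^m := by
        have := pow_pos ha0 (m+1); linarith
      calc ‖((m:ℝ) + 1/2) * lam - s‖ * (a^m - a^(m+1))
          ≤ ((m:ℝ) * lam + (lam + s)) * a^m :=
            mul_le_mul h1 h2 (by linarith [hpow_lt m]) (by positivity)
        _ = lam * ((m:ℝ) * a^m) + (lam + s) * a^m := by ring
  -- integrability on each Ioc 0 (a^n)
  have hIntOn : ∀ n : ℕ, IntegrableOn φ (Ioc (0:ℝ) (a^n)) := by
    intro n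
    rw [hUnion n]
    refine integrableOn_iUnion_of_summable_integral_norm
      (fun k => hint (k+n)) ?_
    exact ((summable_nat_add_iff n).2 hSumNorm)
  -- pairwise disjointness
  have hdisj : ∀ n : ℕ, Pairwise (Function.onFun Disjoint fun k : ℕ => Ioc (a^(k+n+1)) (a^(k+n))) := by
    intro n i j hij
    simp only [Function.onFun]
    rw [Set.Ioc_disjoint_Ioc]
    rcases hij.lt_or_gt with h | h
    · calc a^(i+n) ⊓ a^(j+n) ≤ a^(j+n) := min_le_right _ _
        _ ≤ a^(i+n+1) := hmono (by omega)
        _ ≤ a^(i+n+1) ⊔ a^(j+n+1) := le_max_left _ _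
    · calc a^(i+n) ⊓ a^(j+n) ≤ a^(i+n) := min_le_left _ _
        _ ≤ a^(j+n+1) := hmono (by omega)
        _ ≤ a^(i+n+1) ⊔ a^(j+n+1) := le_max_right _ _
  -- the integral via hasSum
  have hInt : ∀ n : ℕ, ∫ t in Ioc (0:ℝ) (a^n), φ t = (n:ℝ) * lam * a^n := by
    intro n
    have hHS : HasSum (fun k : ℕ => ∫ t in Ioc (a^(k+n+1)) (a^(k+n)), φ t)
        (∫ t in Ioc (0:ℝ) (a^n), φ t) := by
      rw [hUnion n]
      exact hasSum_integral_iUnion (fun k => measurableSet_Ioc) (hdisj n)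
        ((hUnion n) ▸ hIntOn n)
    have halg : HasSum (fun k : ℕ => ∫ t in Ioc (a^(k+n+1)) (a^(k+n)), φ t)
        ((n:ℝ) * lam * a^n) := by
      have hgeo : HasSum (fun k : ℕ => a^k) (1-a)⁻¹ := hasSum_geometric_of_lt_one ha0.le ha1
      have hka : HasSum (fun k : ℕ => (k:ℝ) * a^k) (a/(1-a)^2) :=
        hasSum_coe_mul_geometric_of_norm_lt_one
          (by rw [Real.norm_eq_abs, abs_of_pos ha0]; exact ha1)
      have h := (((hka.mul_left lam).add
        (hgeo.mul_left ((n:ℝ) * lam + lam/2 - s))).mul_left (a^n * (1-a)))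
      convert h using 1
      · rfl
      · funext k
        rw [hval (k+n)]
        push_cast
        rw [show k + n + 1 = (k + n) + 1 from rfl, pow_add, pow_succ, pow_add]
        ring
      · have h2 : lam * a / (1-a) = s - lam/2 := by
          rw [key]; field_simp
        field_simp
        linear_combination (-2) * key
    exact hHS.unique halg
  constructor
  · simpa using hIntOn 0
  · intro n
    rw [setAverage_eq, measureReal_def, hInt n, Real.volume_Ioc, sub_zero,
      ENNReal.toReal_ofReal (by positivity), smul_eq_mul]
    field_simp
end

section
/- Let ε ∈ (0,1). The constant e^{−ε}/(1−ε) in the John–Nirenberg integral inequality is attained: the function φ(t) = −ε·log t satisfies ‖φ‖_BMO([0,1]) = ε and ⟨e^{φ − ⟨φ⟩}⟩_{[0,1]} = e^{−ε}/(1−ε). -/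
open Set MeasureTheory

lemma aux_int_rpow : IntegrableOn (fun t : ℝ => t ^ (-(1:ℝ)/2)) (Ioc 0 1) := by
  have h := intervalIntegral.intervalIntegrable_rpow' (a:=0) (b:=1) (r := -(1:ℝ)/2) (by norm_num)
  rw [intervalIntegrable_iff, uIoc_of_le (by norm_num : (0:ℝ) ≤ 1)] at h
  exact h

lemma aux_log_bound {t : ℝ} (ht : t ∈ Ioc (0:ℝ) 1) : -Real.log t ≤ 2 * t ^ (-(1:ℝ)/2) := by
  have h1 : (0:ℝ) < t ^ (-(1:ℝ)/2) := Real.rpow_pos_of_pos ht.1 _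
  have h2 : Real.log (t ^ (-(1:ℝ)/2)) = (-(1:ℝ)/2) * Real.log t := Real.log_rpow ht.1 _
  have h3 : Real.log (t ^ (-(1:ℝ)/2)) ≤ t ^ (-(1:ℝ)/2) - 1 := Real.log_le_sub_one_of_pos h1
  nlinarith

lemma aux_logsq_bound {t : ℝ} (ht : t ∈ Ioc (0:ℝ) 1) :
    (Real.log t)^2 ≤ 16 * t ^ (-(1:ℝ)/2) := by
  have h1 : (0:ℝ) < t ^ (-(1:ℝ)/4) := Real.rpow_pos_of_pos ht.1 _
  have h2 : Real.log (t ^ (-(1:ℝ)/4)) = (-(1:ℝ)/4) * Real.log t := Real.log_rpow ht.1 _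
  have h3 : Real.log (t ^ (-(1:ℝ)/4)) ≤ t ^ (-(1:ℝ)/4) :=
    (Real.log_le_sub_one_of_pos h1).trans (by linarith)
  have h4 : -Real.log t ≤ 4 * t ^ (-(1:ℝ)/4) := by nlinarith
  have h5 : Real.log t ≤ 0 := Real.log_nonpos ht.1.le ht.2
  have h6 : (t ^ (-(1:ℝ)/4))^2 = t ^ (-(1:ℝ)/2) := by
    rw [← Real.rpow_natCast (t ^ (-(1:ℝ)/4)) 2, ← Real.rpow_mul ht.1.le]
    norm_num
  nlinarith

lemma aux_integrableOn_log : IntegrableOn Real.log (Ioc 0 1) := by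
  refine Integrable.mono (aux_int_rpow.const_mul 2) Real.measurable_log.aestronglyMeasurable ?_
  rw [ae_restrict_iff' measurableSet_Ioc]
  filter_upwards with t ht
  have h1 : (0:ℝ) < t ^ (-(1:ℝ)/2) := Real.rpow_pos_of_pos ht.1 _
  have h5 : Real.log t ≤ 0 := Real.log_nonpos ht.1.le ht.2
  rw [Real.norm_eq_abs, Real.norm_eq_abs, abs_of_nonpos h5, abs_of_pos (by linarith)]
  exact aux_log_bound ht

lemma aux_integrableOn_logsq : IntegrableOn (fun t : ℝ => (Real.log t)^2) (Ioc 0 1) := by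
  refine Integrable.mono (aux_int_rpow.const_mul 16)
    ((Real.measurable_log.pow_const 2).aestronglyMeasurable) ?_
  rw [ae_restrict_iff' measurableSet_Ioc]
  filter_upwards with t ht
  have h1 : (0:ℝ) < t ^ (-(1:ℝ)/2) := Real.rpow_pos_of_pos ht.1 _
  rw [Real.norm_eq_abs, Real.norm_eq_abs, abs_of_nonneg (sq_nonneg _), abs_of_pos (by linarith)]
  exact aux_logsq_bound ht

lemma aux_integral_log {a b : ℝ} (ha : 0 ≤ a) (hb : b ≤ 1) (hab : a ≤ b) :
    ∫ t in Ioc a b, Real.log t = b * Real.log b - a * Real.log a - (b - a) := by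
  rw [← intervalIntegral.integral_of_le hab]
  have h := intervalIntegral.integral_eq_sub_of_hasDeriv_right_of_le
    (f := fun t => t * Real.log t - t)
    (f' := Real.log) hab ((Real.continuous_mul_log.sub continuous_id).continuousOn)
    (fun x hx => by
      have hx0 : x ≠ 0 := ne_of_gt (lt_of_le_of_lt ha hx.1)
      have := (Real.hasDerivAt_mul_log hx0).sub (hasDerivAt_id' (x := x))
      convert this.hasDerivWithinAt using 1
      · rfl
      · ring)
    (by
      rw [intervalIntegrable_iff, uIoc_of_le hab]
      exact aux_integrableOn_log.mono_set (Ioc_subset_Ioc ha hb))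
  rw [h]; ring

lemma aux_integral_logsq {a b : ℝ} (ha : 0 ≤ a) (hb : b ≤ 1) (hab : a ≤ b) :
    ∫ t in Ioc a b, (Real.log t)^2
      = b * (Real.log b)^2 - a * (Real.log a)^2
        - 2 * (b * Real.log b - a * Real.log a - (b - a)) := by
  set G : ℝ → ℝ := fun t =>
    4*(Real.sqrt t * Real.log (Real.sqrt t))^2
      - 4*(Real.sqrt t * (Real.sqrt t * Real.log (Real.sqrt t))) + 2*t with hG
  have hGval : ∀ t : ℝ, 0 ≤ t → G t = t * (Real.log t)^2 - 2*(t*Real.log t) + 2*t := by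
    intro t ht
    obtain ⟨s, hs, rfl⟩ : ∃ s : ℝ, 0 ≤ s ∧ s * s = t :=
      ⟨Real.sqrt t, Real.sqrt_nonneg t, Real.mul_self_sqrt ht⟩
    simp only [hG, Real.sqrt_mul_self hs]
    have hl : Real.log (s*s) = 2 * Real.log s := by
      rcases eq_or_lt_of_le hs with h | h
      · simp [← h]
      · rw [Real.log_mul (ne_of_gt h) (ne_of_gt h)]; ring
    rw [hl]; ring
  have hGcont : Continuous G := by
    have h1 : Continuous fun t : ℝ => Real.sqrt t * Real.log (Real.sqrt t) :=
      Real.continuous_mul_log.comp Real.continuous_sqrt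
    fun_prop
  rw [← intervalIntegral.integral_of_le hab]
  have h := intervalIntegral.integral_eq_sub_of_hasDeriv_right_of_le (f := G)
    (f' := fun t => (Real.log t)^2) hab hGcont.continuousOn
    (fun x hx => by
      have hx0 : 0 < x := lt_of_le_of_lt ha hx.1
      have hH : HasDerivAt (fun t : ℝ => t * (Real.log t)^2 - 2*(t*Real.log t) + 2*t)
          ((Real.log x)^2) x := by
        have h1 : HasDerivAt (fun t : ℝ => t * (Real.log t)^2)
            (1 * (Real.log x)^2 + x * (2 * (Real.log x)^1 * x⁻¹)) x :=
          (hasDerivAt_id x).mul ((Real.hasDerivAt_log (ne_of_gt hx0)).pow 2)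
        have h2 := ((h1.sub (((Real.hasDerivAt_mul_log (ne_of_gt hx0)).const_mul 2))).add
          ((hasDerivAt_id x).const_mul 2))
        refine h2.congr_deriv ?_
        have hx1 : x * x⁻¹ = 1 := mul_inv_cancel₀ (ne_of_gt hx0)
        linear_combination (2 * Real.log x) * hx1
      have hEq : G =ᶠ[nhds x] (fun t : ℝ => t * (Real.log t)^2 - 2*(t*Real.log t) + 2*t) := by
        filter_upwards [eventually_gt_nhds hx0] with t ht
        exact hGval t ht.le
      exact (hH.congr_of_eventuallyEq hEq).hasDerivWithinAt)
    (by
      rw [intervalIntegrable_iff, uIoc_of_le hab]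
      exact aux_integrableOn_logsq.mono_set (Ioc_subset_Ioc ha hb))
  rw [h, hGval b (ha.trans hab), hGval a ha]; ring

lemma aux_avg_Icc (f : ℝ → ℝ) {a b : ℝ} (hab : a < b) :
    ⨍ t in Icc a b, f t = (∫ t in Ioc a b, f t) / (b - a) := by
  rw [setAverage_eq, integral_Icc_eq_integral_Ioc, Real.volume_real_Icc_of_le hab.le,
    smul_eq_mul, inv_mul_eq_div]

lemma aux_mean (ε : ℝ) {a b : ℝ} (ha : 0 ≤ a) (hb : b ≤ 1) (hab : a < b) :
    ⨍ t in Icc a b, (-ε * Real.log t)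
      = -ε * (b * Real.log b - a * Real.log a - (b - a)) / (b - a) := by
  rw [aux_avg_Icc _ hab, integral_const_mul, aux_integral_log ha hb hab.le, mul_div_assoc]

lemma aux_var_integral (ε m : ℝ) {a b : ℝ} (ha : 0 ≤ a) (hb : b ≤ 1) (hab : a < b) :
    ∫ t in Ioc a b, (-ε * Real.log t - m)^2
      = ε^2 * (∫ t in Ioc a b, (Real.log t)^2)
        + (2*ε*m) * (∫ t in Ioc a b, Real.log t) + m^2 * (b - a) := by
  have hsub : Ioc a b ⊆ Ioc (0:ℝ) 1 := Ioc_subset_Ioc ha hb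
  have hint2 : IntegrableOn (fun t => ε^2 * (Real.log t)^2) (Ioc a b) :=
    (aux_integrableOn_logsq.mono_set hsub).const_mul _
  have hint1 : IntegrableOn (fun t => (2*ε*m) * Real.log t) (Ioc a b) :=
    (aux_integrableOn_log.mono_set hsub).const_mul _
  have hintc : IntegrableOn (fun _ : ℝ => m^2) (Ioc a b) :=
    integrableOn_const measure_Ioc_lt_top.ne
  have hint12 : IntegrableOn (fun t => (2*ε*m) * Real.log t + m^2) (Ioc a b) := hint1.add hintc
  have hexp : ∀ t : ℝ, (-ε * Real.log t - m)^2
      = ε^2 * (Real.log t)^2 + ((2*ε*m) * Real.log t + m^2) := by intro t; ring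
  simp_rw [hexp]
  rw [integral_add hint2 hint12, integral_add hint1 hintc,
    integral_const_mul, integral_const_mul, setIntegral_const, Real.volume_real_Ioc_of_le hab.le,
    smul_eq_mul]
  ring

lemma aux_alg (ε a b la lb : ℝ) (ha : 0 ≤ a) (hab : a < b) :
    (ε^2 * (b * lb^2 - a * la^2 - 2 * (b * lb - a * la - (b - a)))
      + (2*ε*(-ε * (b * lb - a * la - (b - a)) / (b - a)))
          * (b * lb - a * la - (b - a))
      + (-ε * (b * lb - a * la - (b - a)) / (b - a))^2 * (b - a)) / (b - a) ≤ ε^2 := by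
  have hh : (0:ℝ) < b - a := by linarith
  have hb0 : (0:ℝ) < b := lt_of_le_of_lt ha hab
  have hne : b - a ≠ 0 := ne_of_gt hh
  have hP : 0 ≤ a*b*(lb - la)^2 := by positivity
  rw [div_le_iff₀ hh]
  have e : ε^2 * (b * lb^2 - a * la^2 - 2 * (b * lb - a * la - (b - a)))
      + (2*ε*(-ε * (b * lb - a * la - (b - a)) / (b - a)))
          * (b * lb - a * la - (b - a))
      + (-ε * (b * lb - a * la - (b - a)) / (b - a))^2 * (b - a)
      = ε^2 * ((b-a)^2 - a*b*(lb - la)^2) / (b - a) := by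
    field_simp
    ring
  rw [e, div_le_iff₀ hh]
  nlinarith [mul_nonneg (sq_nonneg ε) hP]

lemma aux_exp_int (ε : ℝ) (hε0 : 0 < ε) (hε1 : ε < 1) :
    (∫ t in Ioc (0:ℝ) 1, Real.exp (-ε * Real.log t)) = 1 / (1 - ε) := by
  have hEq : EqOn (fun t : ℝ => Real.exp (-ε * Real.log t)) (fun t : ℝ => t ^ (-ε))
      (Ioc (0:ℝ) 1) := by
    intro t ht
    simp only
    rw [Real.rpow_def_of_pos ht.1, mul_comm]
  rw [setIntegral_congr_fun measurableSet_Ioc hEq, ← intervalIntegral.integral_of_le zero_le_one,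
    integral_rpow (Or.inl (by linarith : (-1:ℝ) < -ε))]
  rw [Real.one_rpow, Real.zero_rpow (by linarith : -ε + 1 ≠ 0)]
  rw [show -ε + 1 = 1 - ε by ring]
  ring

theorem john_nirenberg_extremal_function
    (ε : ℝ) (hε : ε ∈ Set.Ioo (0:ℝ) 1)
    (φ : ℝ → ℝ) (hφ : ∀ t : ℝ, φ t = -ε * Real.log t) :
    (∀ a b : ℝ, 0 ≤ a → b ≤ 1 → a < b →
      (⨍ t in Set.Icc a b, (φ t - ⨍ s in Set.Icc a b, φ s)^2) ≤ ε^2) ∧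
    (⨍ t in Set.Icc (0:ℝ) 1, (φ t - ε)^2) = ε^2 ∧
    (⨍ t in Set.Icc (0:ℝ) 1, φ t) = ε ∧
    (∫ t in Set.Icc (0:ℝ) 1, Real.exp (φ t)) = 1 / (1 - ε) ∧
    (⨍ t in Set.Icc (0:ℝ) 1, Real.exp (φ t - ε)) = Real.exp (-ε) / (1 - ε) := by
  obtain ⟨hε0, hε1⟩ := hε
  refine ⟨?_, ?_, ?_, ?_, ?_⟩
  · intro a b ha hb hab
    simp only [hφ]
    rw [aux_mean ε ha hb hab, aux_avg_Icc _ hab,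
      aux_var_integral ε _ ha hb hab, aux_integral_log ha hb hab.le,
      aux_integral_logsq ha hb hab.le]
    exact aux_alg ε a b (Real.log a) (Real.log b) ha hab
  · simp only [hφ]
    rw [aux_avg_Icc _ zero_lt_one,
      aux_var_integral ε ε le_rfl le_rfl zero_lt_one,
      aux_integral_log le_rfl le_rfl zero_le_one,
      aux_integral_logsq le_rfl le_rfl zero_le_one]
    simp [Real.log_one]
    ring
  · simp only [hφ]
    rw [aux_mean ε le_rfl le_rfl zero_lt_one]
    simp [Real.log_one]
  · simp only [hφ]
    rw [integral_Icc_eq_integral_Ioc]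
    exact aux_exp_int ε hε0 hε1
  · simp only [hφ]
    rw [aux_avg_Icc _ zero_lt_one]
    simp_rw [Real.exp_sub]
    rw [integral_div, aux_exp_int ε hε0 hε1, Real.exp_neg]
    have h := Real.exp_pos ε
    field_simp
    ring
end
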